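/- arXiv:1605.06267 — 10 statements merged into one kernel-verified Lean document; each statement's English description precedes it below -/
import Mathlib

section
/- Let n be an odd positive integer and q = 2^n, and let * denote the Knuth binary presemifield multiplication on F_q. Then: (i) for every a ∈ F_q with a ∉ {0,1}, the set {y ∈ F_q : y + a*(y² + y) = 0} has exactly 2 elements; (ii) the set {y ∈ F_q : y + 1*(y² + y) = 0} equals {0}. (These facts express that O_g := {(y²+y, y) : y ∈ F_q} ∪ {(0),(1)} is a translation hyperoval in the Knuth presemifield plane Π(K_n).) -/
private lemma knuthAS {F : Type*} [Field F] [Fintype F] (h2 : (2:F) = 0)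
    (Tr : F → F) (trA : ∀ x y : F, Tr (x+y) = Tr x + Tr y) (tr1 : Tr 1 = 1)
    (tr01 : ∀ x : F, Tr x = 0 ∨ Tr x = 1) (trq : ∀ d : F, Tr (d^2 + d) = 0)
    (c : F) (hc : Tr c = 0) : ∃ d : F, d^2 + d = c := by
  classical
  set T0 : Finset F := Finset.univ.filter (fun x => Tr x = 0) with hT0
  set T1 : Finset F := Finset.univ.filter (fun x => ¬ Tr x = 0) with hT1
  have hsplit : T0.card + T1.card = Fintype.card F := by
    rw [hT0, hT1, Finset.card_filter_add_card_filter_not, Finset.card_univ]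
  have hbij : T0.card = T1.card := by
    apply Finset.card_bij (fun x _ => x + 1)
    · intro x hx
      simp only [hT0, Finset.mem_filter] at hx
      simp only [hT1, Finset.mem_filter, Finset.mem_univ, true_and]
      rw [trA, hx.2, tr1, zero_add]
      exact one_ne_zero
    · intro x _ y _ h
      exact add_right_cancel h
    · intro y hy
      simp only [hT1, Finset.mem_filter, Finset.mem_univ, true_and] at hy
      refine ⟨y + 1, ?_, by linear_combination h2⟩
      simp only [hT0, Finset.mem_filter, Finset.mem_univ, true_and]
      rcases tr01 y with h | h
      · exact absurd h hy
      · rw [trA, h, tr1]; linear_combination h2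
  have hT0card : 2 * T0.card = Fintype.card F := by omega
  set R : Finset F := Finset.univ.image (fun d : F => d^2 + d) with hR
  have hfib : ∀ b ∈ R, (Finset.univ.filter (fun d : F => d^2 + d = b)).card = 2 := by
    intro b hb
    simp only [hR, Finset.mem_image, Finset.mem_univ, true_and] at hb
    obtain ⟨d₀, hd₀⟩ := hb
    have : Finset.univ.filter (fun d : F => d^2 + d = b) = {d₀, d₀ + 1} := by
      ext d
      simp only [Finset.mem_filter, Finset.mem_univ, true_and, Finset.mem_insert,
        Finset.mem_singleton]
      constructor
      · intro hd
        have key : (d + d₀) * (d + d₀ + 1) = 0 := by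
          linear_combination hd - hd₀ + (d*d₀ + d₀^2 + d₀)*h2
        rcases mul_eq_zero.mp key with h | h
        · left; linear_combination h - d₀*h2
        · right; linear_combination h - d₀*h2 - h2
      · rintro (rfl | rfl)
        · exact hd₀
        · linear_combination hd₀ + (d₀ + 1) * h2
    rw [this]
    rw [Finset.card_insert_of_notMem, Finset.card_singleton]
    simp only [Finset.mem_singleton]
    intro h
    exact one_ne_zero (by linear_combination -h)
  have hRcard : 2 * R.card = Fintype.card F := by
    have := Finset.card_eq_sum_card_image (fun d : F => d^2 + d) Finset.univ
    rw [Finset.card_univ] at this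
    rw [this, ← hR, Finset.sum_congr rfl hfib, Finset.sum_const, smul_eq_mul, mul_comm]
  have hsub : R ⊆ T0 := by
    intro b hb
    simp only [hR, Finset.mem_image, Finset.mem_univ, true_and] at hb
    obtain ⟨d, rfl⟩ := hb
    simp only [hT0, Finset.mem_filter, Finset.mem_univ, true_and]
    exact trq d
  have hReq : R = T0 := Finset.eq_of_subset_of_card_le hsub (by omega)
  have : c ∈ T0 := by simp [hT0, hc]
  rw [← hReq] at this
  simp only [hR, Finset.mem_image, Finset.mem_univ, true_and] at this
  exact this

private lemma knuthCube {F : Type*} [Field F] [Fintype F] (n : ℕ) (hn : Odd n)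
    (hF : Fintype.card F = 2 ^ n) (t : F) : ∃ w : F, w ^ 3 = t := by
  rcases eq_or_ne t 0 with rfl | ht
  · exact ⟨0, by ring⟩
  · obtain ⟨m, hm⟩ := hn
    have h3 : 3 ∣ 2 ^ (n + 1) - 1 := by
      have h4 : 2 ^ (n + 1) = 4 ^ (m + 1) := by
        rw [hm, show 2*m+1+1 = 2*(m+1) from by ring, pow_mul]; norm_num
      have : 4 ^ (m + 1) % 3 = 1 := by
        rw [Nat.pow_mod]; simp
      have h1 : 1 ≤ 4 ^ (m + 1) := Nat.one_le_pow _ _ (by norm_num)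
      omega
    obtain ⟨k, hk⟩ := h3
    refine ⟨t ^ k, ?_⟩
    have hpow : t ^ (2 ^ n - 1) = 1 := by
      rw [← hF]; exact FiniteField.pow_card_sub_one_eq_one t ht
    have hexp : k * 3 = 2 * (2 ^ n - 1) + 1 := by
      have h1 : 1 ≤ 2 ^ n := Nat.one_le_two_pow
      have : 2 ^ (n + 1) = 2 * 2 ^ n := by ring
      omega
    rw [← pow_mul, hexp, pow_add, mul_comm 2 (2^n-1), pow_mul, hpow, one_pow, pow_one, one_mul]

private lemma knuthUniq {F : Type*} [Field F] (h2 : (2:F) = 0)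
    (Tr : F → F) (trA : ∀ x y : F, Tr (x+y) = Tr x + Tr y) (tr1 : Tr 1 = 1)
    (trsq : ∀ x : F, Tr (x^2) = Tr x) (trq : ∀ d : F, Tr (d^2 + d) = 0)
    (c : F) (hTrc : Tr c = 0) (r s : F) (hr0 : r ≠ 0) (hs0 : s ≠ 0) (hrs : r ≠ s)
    (hr : r^3 + c*r + c = 0) (hs : s^3 + c*s + c = 0) : False := by
  set σ : F := r + s with hσdef
  set p : F := r * s with hpdef
  have hσ : σ ≠ 0 := by
    intro h
    apply hrs
    linear_combination h - s * h2
  have hp : p ≠ 0 := mul_ne_zero hr0 hs0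
  have hc1 : σ * (σ^2 + p) = c * σ := by
    linear_combination hr + hs + (2*r^2*s + 2*r*s^2 - r*c - s*c - c) * h2
  have hc2 : σ^2 + p = c := by
    have := mul_left_cancel₀ hσ (hc1.trans (mul_comm c σ))
    exact this
  have hc3 : p * σ = c := by
    linear_combination hr + r * hc2 + (- r^3 - r^2*s - c) * h2
  set δ : F := σ + 1 with hδdef
  have hpd : p * δ = σ^2 := by
    linear_combination hc3 - hc2 + p * h2
  have hδ : δ ≠ 0 := by
    intro h
    apply hσ
    have : σ^2 = 0 := by rw [← hpd, h, mul_zero]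
    exact pow_eq_zero_iff (two_ne_zero) |>.mp this
  have e : δ * (r^2 + r*σ) = σ^2 := by
    linear_combination hpd + (δ*r^2)*h2
  have hinv : σ * σ⁻¹ = 1 := mul_inv_cancel₀ hσ
  have key : δ * ((r*σ⁻¹)^2 + (r*σ⁻¹)) = 1 := by
    calc δ * ((r*σ⁻¹)^2 + (r*σ⁻¹)) = δ * (r^2 + r*σ) * (σ⁻¹)^2 := by
          linear_combination (-δ*r*σ⁻¹) * hinv
      _ = σ^2 * (σ⁻¹)^2 := by rw [e]
      _ = 1 := by rw [← mul_pow, hinv, one_pow]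
  have hτ : (r*σ⁻¹)^2 + (r*σ⁻¹) = δ⁻¹ := (inv_eq_of_mul_eq_one_right key).symm
  have hTrδ : Tr δ⁻¹ = 0 := by rw [← hτ]; exact trq (r*σ⁻¹)
  have hcval : c = σ^2 + σ + 1 + δ⁻¹ := by
    have hδ2 : δ * δ⁻¹ = 1 := mul_inv_cancel₀ hδ
    apply mul_right_cancel₀ hδ
    -- c * δ = σ^3
    calc c * δ = σ^3 := by linear_combination σ * hpd - δ * hc3 + (c*δ - σ^3 - c - c*r - c*s + 3*r*s^2 + 3*r^2*s + r^3 + s^3)*h2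
      _ = (σ^2 + σ + 1 + δ⁻¹) * δ := by
          linear_combination - hδ2 + (σ^3 + 1 - 2 - r - 2*r*s - 3*r*s^2 - r^2 - 3*r^2*s - r^3 - s - s^2 - s^3) * h2
  have : (0 : F) = 1 := by
    calc (0:F) = Tr c := hTrc.symm
      _ = Tr (σ^2) + Tr σ + Tr 1 + Tr δ⁻¹ := by
          rw [hcval, trA, trA, trA]
      _ = Tr σ + Tr σ + 1 + 0 := by rw [trsq, tr1, hTrδ]
      _ = 1 := by linear_combination Tr σ * h2
  exact one_ne_zero this.symm


/-- Theorem: `O_g = {(y²+y, y) : y ∈ F_q} ∪ {(0),(1)}` is a translation hyperoval in the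
Knuth binary presemifield plane `Π(K_n)`.  Analytically: (i) for every `a ∉ {0,1}` the
equation `y + a*(y²+y) = 0` has exactly `2` solutions, and (ii) `y + 1*(y²+y) = 0`
only for `y = 0`.  Here `x * y = xy + (y·Tr(x) + x·Tr(y))²` is the Knuth multiplication. -/
theorem knuth_hyperoval_type_b
    (n : ℕ) (hn : Odd n) (hn0 : 0 < n)
    {F : Type*} [Field F] [Fintype F] (hF : Fintype.card F = 2 ^ n)
    (Tr : F → F) (hTr : ∀ x : F, Tr x = ∑ i ∈ Finset.range n, x ^ 2 ^ i)
    (kmul : F → F → F)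
    (hkmul : ∀ x y : F, kmul x y = x * y + (y * Tr x + x * Tr y) ^ 2) :
    (∀ a : F, a ≠ 0 → a ≠ 1 →
      ({y : F | y + kmul a (y ^ 2 + y) = 0}).ncard = 2) ∧
    {y : F | y + kmul 1 (y ^ 2 + y) = 0} = {0} := by
  classical
  -- characteristic 2
  have h2 : (2 : F) = 0 := by
    have := FiniteField.cast_card_eq_zero F
    rw [hF] at this
    push_cast at this
    exact pow_eq_zero_iff hn0.ne' |>.mp this
  haveI hch : CharP F 2 := by
    have hd : ringChar F ∣ 2 := ringChar.dvd h2
    have h1 : ringChar F ≠ 1 := CharP.ringChar_ne_one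
    have : ringChar F = 2 := by
      rcases (Nat.dvd_prime Nat.prime_two).mp hd with h | h
      · exact absurd h h1
      · exact h
    exact this ▸ ringChar.charP F
  haveI := Fact.mk Nat.prime_two
  -- trace facts
  have trA : ∀ x y : F, Tr (x + y) = Tr x + Tr y := by
    intro x y
    simp only [hTr, ← Finset.sum_add_distrib]
    exact Finset.sum_congr rfl fun i _ => add_pow_char_pow x y 2 i
  have trsq : ∀ x : F, Tr (x ^ 2) = Tr x := by
    intro x
    have hpc : x ^ 2 ^ n = x := by rw [← hF]; exact FiniteField.pow_card x
    have h1 : ∀ i, (x ^ 2) ^ 2 ^ i = x ^ 2 ^ (i + 1) := by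
      intro i; rw [← pow_mul, ← pow_succ']
    calc Tr (x ^ 2) = ∑ i ∈ Finset.range n, x ^ 2 ^ (i + 1) := by
          rw [hTr]; exact Finset.sum_congr rfl fun i _ => h1 i
      _ = ∑ i ∈ Finset.range (n + 1), x ^ 2 ^ i - x ^ 2 ^ 0 := by
          rw [Finset.sum_range_succ']; ring
      _ = ∑ i ∈ Finset.range n, x ^ 2 ^ i + x ^ 2 ^ n - x ^ 2 ^ 0 := by
          rw [Finset.sum_range_succ]
      _ = Tr x := by rw [hTr, hpc, pow_zero, pow_one]; ring
  have trsq2 : ∀ x : F, (Tr x) ^ 2 = Tr x := by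
    intro x
    have h1 : (Tr x) ^ 2 = Tr (x ^ 2) := by
      rw [hTr, hTr, CharTwo.sum_sq]
      exact Finset.sum_congr rfl fun i _ => by rw [← pow_mul, ← pow_mul, mul_comm]
    rw [h1, trsq]
  have tr1 : Tr 1 = 1 := by
    rw [hTr]
    simp only [one_pow, Finset.sum_const, Finset.card_range, nsmul_eq_mul, mul_one]
    obtain ⟨m, rfl⟩ := hn
    push_cast
    rw [h2]; ring
  have tr01 : ∀ x : F, Tr x = 0 ∨ Tr x = 1 := by
    intro x
    have : Tr x * (Tr x - 1) = 0 := by linear_combination trsq2 x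
    rcases mul_eq_zero.mp this with h | h
    · exact Or.inl h
    · exact Or.inr (by linear_combination h)
  have trq : ∀ d : F, Tr (d ^ 2 + d) = 0 := by
    intro d
    rw [trA, trsq]
    linear_combination Tr d * h2
  constructor
  · -- part (i)
    intro a ha0 ha1
    rcases tr01 a with htra | htra
    · -- Tr a = 0 : the set is {0, (1+a)*a⁻¹}
      have hainv : a * a⁻¹ = 1 := mul_inv_cancel₀ ha0
      have h1a : (1 : F) + a ≠ 0 := by
        intro h
        exact ha1 (by linear_combination h - h2)
      have heq : ∀ y : F, y + kmul a (y ^ 2 + y) = y * (a * y + (1 + a)) := by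
        intro y
        rw [hkmul, htra, trq]
        ring
      have hset : {y : F | y + kmul a (y ^ 2 + y) = 0} = {0, (1 + a) * a⁻¹} := by
        ext y
        simp only [Set.mem_setOf_eq, Set.mem_insert_iff, Set.mem_singleton_iff, heq]
        constructor
        · intro h
          rcases mul_eq_zero.mp h with h | h
          · exact Or.inl h
          · refine Or.inr ?_
            field_simp
            linear_combination h - (1 + a) * h2
        · rintro (rfl | rfl)
          · rw [zero_mul]
          · have : a * ((1 + a) * a⁻¹ ) + (1 + a) = 0 := by
              have : a * ((1 + a) * a⁻¹) = (1 + a) * (a * a⁻¹) := by ring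
              rw [this, hainv]
              linear_combination (1 + a) * h2
            rw [this, mul_zero]
      rw [hset]
      exact Set.ncard_pair (Ne.symm (mul_ne_zero h1a (inv_ne_zero ha0)))
    · -- Tr a = 1
      set c : F := 1 + a with hcdef
      have hc0 : c ≠ 0 := by
        intro h
        exact ha1 (by linear_combination h - h2)
      have hTrc : Tr c = 0 := by
        rw [hcdef, trA, tr1, htra]
        linear_combination h2
      -- membership criterion
      have hmem : ∀ y : F, y + kmul a (y ^ 2 + y) = 0 ↔ y * (y ^ 3 + c * y + c) = 0 := by
        intro y
        rw [hkmul, htra, trq]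
        constructor
        · intro h; linear_combination h - y ^ 3 * h2
        · intro h; linear_combination h + y ^ 3 * h2
      -- construct the nonzero root y₀
      obtain ⟨s, hs⟩ := knuthAS h2 Tr trA tr1 tr01 trq c hTrc
      set e : F := c ^ 2 ^ (n - 1) with hedef
      have he0 : e ≠ 0 := pow_ne_zero _ hc0
      have he2 : e ^ 2 = c := by
        rw [hedef, ← pow_mul, ← pow_succ, Nat.sub_add_cancel hn0, ← hF]
        exact FiniteField.pow_card c
      have hs0 : s ≠ 0 := by
        intro h
        apply hc0
        linear_combination -hs + (s + 1) * h
      obtain ⟨w, hw⟩ := knuthCube n hn hF (s * e⁻¹)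
      have ht0 : s * e⁻¹ ≠ 0 := mul_ne_zero hs0 (inv_ne_zero he0)
      have hw0 : w ≠ 0 := by
        intro h
        apply ht0
        rw [← hw, h]; ring
      have heinv : e * e⁻¹ = 1 := mul_inv_cancel₀ he0
      have hsinv : s * s⁻¹ = 1 := mul_inv_cancel₀ hs0
      have hwinv : w * w⁻¹ = 1 := mul_inv_cancel₀ hw0
      set z : F := w + w⁻¹ with hzdef
      have hw3inv : (w⁻¹) ^ 3 = (s * e⁻¹)⁻¹ := by
        rw [inv_pow, hw]
      have hA : z ^ 3 + z = (s * e⁻¹) + (s * e⁻¹)⁻¹ := by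
        linear_combination hw + hw3inv + (2 * w + 2 * w⁻¹) * h2 + (3 * w + 3 * w⁻¹) * hwinv
      have hB : (s * e⁻¹) + (s * e⁻¹)⁻¹ = e⁻¹ := by
        rw [mul_inv, inv_inv]
        apply mul_right_cancel₀ (mul_ne_zero hs0 he0)
        have expand : (s * e⁻¹ + s⁻¹ * e) * (s * e) = s ^ 2 * (e * e⁻¹) + e ^ 2 * (s * s⁻¹) := by
          ring
        rw [expand, heinv, hsinv, he2, mul_one, mul_one]
        have : e⁻¹ * (s * e) = s * (e * e⁻¹) := by ring
        rw [this, heinv, mul_one]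
        linear_combination hs + (1 + a - s) * h2
      have hze : z ^ 3 + z = e⁻¹ := hA.trans hB
      set y₀ : F := e * z with hy₀def
      have hy₀ : y₀ ^ 3 + c * y₀ + c = 0 := by
        linear_combination e ^ 3 * hze + (e * z + 1) * he2 + e ^ 2 * heinv + (c * e * z + c - e ^ 3 * z) * h2
      have hy₀0 : y₀ ≠ 0 := by
        intro h
        apply hc0
        linear_combination hy₀ - (y₀ ^ 2 + c) * h
      have hset : {y : F | y + kmul a (y ^ 2 + y) = 0} = {0, y₀} := by
        ext y
        simp only [Set.mem_setOf_eq, Set.mem_insert_iff, Set.mem_singleton_iff, hmem]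
        constructor
        · intro h
          rcases mul_eq_zero.mp h with h | h
          · exact Or.inl h
          · refine Or.inr ?_
            by_contra hne
            have hy0 : y ≠ 0 := by
              intro h0
              apply hc0
              linear_combination h - (y ^ 2 + c) * h0
            exact knuthUniq h2 Tr trA tr1 trsq trq c hTrc y y₀ hy0 hy₀0 hne h hy₀
        · rintro (rfl | rfl)
          · rw [zero_mul]
          · rw [hy₀, mul_zero]
      rw [hset]
      exact Set.ncard_pair (Ne.symm hy₀0)
  · -- part (ii)
    ext y
    simp only [Set.mem_setOf_eq, Set.mem_singleton_iff]
    rw [hkmul, tr1, trq]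
    constructor
    · intro h
      have h4 : y ^ 4 = 0 := by
        linear_combination h - (y ^ 3 + y ^ 2 + y) * h2
      exact pow_eq_zero_iff (by norm_num : (4 : ℕ) ≠ 0) |>.mp h4
    · rintro rfl
      ring
end

section
/- Let n be an odd positive integer and q = 2^n. For every a ∈ F_q with Tr(a) = 1 and a ≠ 1, the set {y ∈ F_q : y⁴ + (a+1)y² + (a+1)y = 0} has exactly 2 elements. -/
/-!
Write `b = a + 1`; since `n` is odd, `Tr 1 = 1`, so `Tr b = 0` and `b ≠ 0`, and the quartic is
`y (y³ + b y + b)`. The cubic has a root: by additive Hilbert 90 (`w² + w = b`, proved by counting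
the image of `w ↦ w² + w` against the roots of the trace polynomial), and because squaring and
cubing are bijective on `F` (`3 ∤ 2ⁿ - 1`), the Cardano-type substitution `y = s (u + u⁻¹)` with
`s² = b`, `u³ = w / s` gives one. It has no second root: if `r ≠ t` are roots then
`z = t / r` satisfies `b = (r² + r) + 1 + (z² + z)`, whence `Tr b = 1`.
-/

open Finset Polynomial

section AbsTrace

variable {R : Type*}

def absTrace [Semiring R] (p n : ℕ) (x : R) : R := ∑ i ∈ range n, x ^ p ^ i

theorem absTrace_one [Semiring R] (p n : ℕ) : absTrace p n (1 : R) = n := by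
  simp [absTrace]

theorem absTrace_one_of_odd [Ring R] [CharP R 2] {n : ℕ} (hn : Odd n) :
    absTrace 2 n (1 : R) = 1 := by
  rw [absTrace_one, CharTwo.natCast_eq_ite, if_neg (Nat.not_even_iff_odd.2 hn)]

theorem absTrace_add [CommSemiring R] {p : ℕ} [ExpChar R p] (n : ℕ) (x y : R) :
    absTrace p n (x + y) = absTrace p n x + absTrace p n y := by
  simp only [absTrace, add_pow_expChar_pow, sum_add_distrib]

theorem card_filter_pow_sub_self_eq_le {F : Type*} [Field F] [Fintype F] [DecidableEq F]
    {p : ℕ} (hp : 1 < p) (c : F) : #{w : F | w ^ p - w = c} ≤ p := by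
  set P : F[X] := X ^ p - X - C c
  have hnat : P.natDegree = p := by
    rw [natDegree_sub_C, FiniteField.X_pow_card_sub_X_natDegree_eq F hp]
  have hP0 : P ≠ 0 := fun h ↦ by simp [h] at hnat; omega
  calc #{w : F | w ^ p - w = c} ≤ P.roots.toFinset.card := by
        refine card_le_card fun w hw ↦ ?_
        simp only [mem_filter] at hw
        simp [mem_roots hP0, P, hw.2]
    _ ≤ P.natDegree := P.roots.toFinset_card_le.trans P.card_roots'
    _ = p := hnat

variable {F : Type*} [Field F] [Fintype F] {p : ℕ} [Fact p.Prime]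

theorem le_card_image_pow_sub_self [DecidableEq F] {m : ℕ}
    (hF : Fintype.card F = p ^ (m + 1)) :
    p ^ m ≤ #(univ.image fun w : F ↦ w ^ p - w) := by
  have hp : p.Prime := Fact.out
  have h := card_le_mul_card_image (univ : Finset F) p fun c _ ↦
    card_filter_pow_sub_self_eq_le hp.one_lt c
  rw [card_univ, hF, pow_succ'] at h
  exact Nat.le_of_mul_le_mul_left h hp.pos

theorem card_filter_absTrace_eq_zero_le [DecidableEq F] (m : ℕ) :
    #{x : F | absTrace p (m + 1) x = 0} ≤ p ^ m := by
  set P : F[X] := X ^ p ^ m + ∑ i ∈ range m, X ^ p ^ i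
  have hdeg : (∑ i ∈ range m, (X : F[X]) ^ p ^ i).degree < ↑(p ^ m) := by
    refine (degree_sum_le _ _).trans_lt
      ((Finset.sup_lt_iff (WithBot.bot_lt_coe _)).2 fun i hi ↦ ?_)
    rw [degree_X_pow, Nat.cast_lt]
    exact Nat.pow_lt_pow_right (Fact.out : p.Prime).one_lt (mem_range.1 hi)
  have hmonic : P.Monic := monic_X_pow_add hdeg
  calc #{x : F | absTrace p (m + 1) x = 0} ≤ P.roots.toFinset.card := by
        refine card_le_card fun x hx ↦ ?_
        simp only [mem_filter, absTrace, sum_range_succ] at hx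
        simp [mem_roots hmonic.ne_zero, P, eval_finsetSum, ← hx.2, add_comm]
    _ ≤ P.natDegree := P.roots.toFinset_card_le.trans P.card_roots'
    _ = p ^ m := by
      rw [natDegree_add_eq_left_of_degree_lt (by simpa using hdeg), natDegree_X_pow]

variable [CharP F p]

theorem absTrace_pow_char_sub_self {n : ℕ} (hF : Fintype.card F = p ^ n) (x : F) :
    absTrace p n (x ^ p - x) = 0 := by
  have hstep (i : ℕ) : (x ^ p - x) ^ p ^ i = x ^ p ^ (i + 1) - x ^ p ^ i := by
    rw [sub_pow_char_pow, ← pow_mul, ← pow_succ']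
  rw [absTrace, sum_congr rfl fun i _ ↦ hstep i, sum_range_sub (fun i ↦ x ^ p ^ i), ← hF,
    FiniteField.pow_card, pow_zero, pow_one, sub_self]

theorem exists_pow_char_sub_self_eq_of_absTrace_eq_zero {m : ℕ}
    (hF : Fintype.card F = p ^ (m + 1)) {c : F} (hc : absTrace p (m + 1) c = 0) :
    ∃ w : F, w ^ p - w = c := by
  classical
  have hsub :
      univ.image (fun w : F ↦ w ^ p - w) ⊆ ({x | absTrace p (m + 1) x = 0} : Finset F) := by
    intro x hx
    obtain ⟨w, -, rfl⟩ := mem_image.1 hx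
    simp [absTrace_pow_char_sub_self hF]
  have himage := eq_of_subset_of_card_le hsub
    ((card_filter_absTrace_eq_zero_le m).trans (le_card_image_pow_sub_self hF))
  have hc' : c ∈ ({x | absTrace p (m + 1) x = 0} : Finset F) := by simp [hc]
  rw [← himage] at hc'
  simpa using hc'

end AbsTrace

theorem coprime_two_pow_sub_one_three {n : ℕ} (hn : Odd n) : (2 ^ n - 1).Coprime 3 := by
  obtain ⟨k, rfl⟩ := hn
  have h4 : 4 ^ k % 3 = 1 := by rw [Nat.pow_mod]; simp
  have h : 2 ^ (2 * k + 1) = 2 * 4 ^ k := by rw [pow_succ, pow_mul]; ring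
  rw [Nat.coprime_comm, Nat.Prime.coprime_iff_not_dvd Nat.prime_three, h]
  omega

theorem exists_pow_eq_of_coprime {F : Type*} [Field F] [Fintype F] {k : ℕ}
    (hk : (Fintype.card F - 1).Coprime k) {c : F} (hc : c ≠ 0) : ∃ u : F, u ^ k = c := by
  rw [← Nat.card_eq_fintype_card, ← Nat.card_units] at hk
  obtain ⟨u, hu⟩ := hk.pow_left_bijective.2 (Units.mk0 c hc)
  exact ⟨u, by simpa using congrArg Units.val hu⟩

section CharTwo

variable {F : Type*} [Field F] [Fintype F] [CharP F 2] {n : ℕ}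

theorem exists_cubic_root_of_absTrace_eq_zero (hF : Fintype.card F = 2 ^ n) (hn : Odd n)
    {b : F} (hb : b ≠ 0) (htr : absTrace 2 n b = 0) : ∃ y : F, y ^ 3 + b * y + b = 0 := by
  have h2 : (2 : F) = 0 := CharTwo.two_eq_zero
  obtain ⟨m, rfl⟩ : ∃ m, n = m + 1 := Nat.exists_eq_add_one.2 hn.pos
  obtain ⟨w, hw⟩ := exists_pow_char_sub_self_eq_of_absTrace_eq_zero hF htr
  obtain ⟨s, rfl⟩ := FiniteField.isSquare_of_char_two (ringChar.eq F 2) b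
  have hs : s ≠ 0 := by rintro rfl; simp at hb
  have hw0 : w ≠ 0 := by rintro rfl; simp [eq_comm, hs] at hw
  obtain ⟨u, hu⟩ := exists_pow_eq_of_coprime (hF ▸ coprime_two_pow_sub_one_three hn)
    (div_ne_zero hw0 hs)
  have hu0 : u ≠ 0 := by rintro rfl; simp [eq_comm, hw0, hs] at hu
  have e : s * u ^ 6 + u ^ 3 = s := by
    rw [eq_div_iff hs] at hu
    subst hu
    exact mul_left_cancel₀ hs (by linear_combination hw + s * u ^ 3 * h2)
  refine ⟨s * (u + u⁻¹), ?_⟩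
  field_simp
  linear_combination s ^ 2 * e + s ^ 3 * (1 + 2 * u ^ 2 + 2 * u ^ 4) * h2

theorem absTrace_eq_one_of_ne_cubic_roots (hF : Fintype.card F = 2 ^ n) (hn : Odd n)
    {b r t : F} (hr : r ^ 3 + b * r + b = 0) (ht : t ^ 3 + b * t + b = 0) (hrt : r ≠ t) :
    absTrace 2 n b = 1 := by
  have h2 : (2 : F) = 0 := CharTwo.two_eq_zero
  have hr0 : r ≠ 0 := by
    rintro rfl
    obtain rfl : b = 0 := by simpa using hr
    exact hrt (pow_eq_zero_iff three_ne_zero |>.1 (by simpa using ht)).symm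
  have hq : t ^ 2 + r * t + r ^ 2 + b = 0 := by
    refine (mul_eq_zero.1 ?_).resolve_left (sub_ne_zero.2 hrt.symm)
    linear_combination ht - hr
  have hb : b = (r ^ 2 - r) + 1 + ((t / r) ^ 2 - t / r) := by
    field_simp
    linear_combination (r + 1) * hr - hq + (r * t - b * r - r ^ 4) * h2
  rw [hb, absTrace_add, absTrace_add, absTrace_pow_char_sub_self hF,
    absTrace_pow_char_sub_self hF, absTrace_one_of_odd hn, zero_add, add_zero]

end CharTwo

theorem quartic_two_solutions_general
    (n : ℕ) (hn : Odd n)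
    {F : Type*} [Field F] [Fintype F] (hF : Fintype.card F = 2 ^ n)
    (Tr : F → F) (hTr : ∀ x : F, Tr x = ∑ i ∈ Finset.range n, x ^ 2 ^ i) :
    ∀ a : F, Tr a = 1 → a ≠ 1 →
      ({y : F | y ^ 4 + (a + 1) * y ^ 2 + (a + 1) * y = 0}).ncard = 2 := by
  obtain rfl : Tr = absTrace 2 n := funext hTr
  intro a ha ha1
  have : CharP F 2 := charP_of_card_eq_prime_pow hF
  have hb : a + 1 ≠ 0 := fun h ↦ ha1 (CharTwo.add_eq_zero.1 h)
  have htr : absTrace 2 n (a + 1) = 0 := by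
    rw [absTrace_add, ha, absTrace_one_of_odd hn, CharTwo.add_self_eq_zero]
  obtain ⟨y₀, hy₀⟩ := exists_cubic_root_of_absTrace_eq_zero hF hn hb htr
  have hy₀0 : y₀ ≠ 0 := by rintro rfl; simp [hb] at hy₀
  suffices {y : F | y ^ 4 + (a + 1) * y ^ 2 + (a + 1) * y = 0} = {0, y₀} by
    rw [this, Set.ncard_pair hy₀0.symm]
  ext y
  simp only [Set.mem_ofPred_eq, Set.mem_insert_iff, Set.mem_singleton_iff]
  have hfac : y ^ 4 + (a + 1) * y ^ 2 + (a + 1) * y = y * (y ^ 3 + (a + 1) * y + (a + 1)) := by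
    ring
  rw [hfac, mul_eq_zero]
  refine or_congr_right ⟨fun hy ↦ ?_, fun hy ↦ hy ▸ hy₀⟩
  by_contra hne
  simpa [htr] using absTrace_eq_one_of_ne_cubic_roots hF hn hy hy₀ hne

/-- For `n` odd, `q = 2^n`, and every `a ∈ F_q` with `Tr(a) = 1` and `a ≠ 1`, the
equation `y⁴ + (a+1)y² + (a+1)y = 0` has exactly `2` solutions in `F_q`. -/
theorem quartic_two_solutions
    (n : ℕ) (hn : Odd n) (hn0 : 0 < n)
    {F : Type*} [Field F] [Fintype F] (hF : Fintype.card F = 2 ^ n)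
    (Tr : F → F) (hTr : ∀ x : F, Tr x = ∑ i ∈ Finset.range n, x ^ 2 ^ i) :
    ∀ a : F, Tr a = 1 → a ≠ 1 →
      ({y : F | y ^ 4 + (a + 1) * y ^ 2 + (a + 1) * y = 0}).ncard = 2 :=
  quartic_two_solutions_general n hn hF Tr hTr
end

section
/- Let n be an odd positive integer and q = 2^n, and let ∘ denote the symplectic Knuth presemifield multiplication on F_q. Then for all x, y, z ∈ F_q one has Tr(x·(y ∘ z)) = Tr(y·(x ∘ z)). (This says that the presemifield K_n^{td} is symplectic.) -/
/-- The Knuth derivative `K_n^{td}`, with multiplication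
`x ∘ y = xy + Tr(x)·y^{2^{n-1}} + Tr(x²y)`, is a symplectic presemifield:
`Tr(x·(y ∘ z)) = Tr(y·(x ∘ z))` for all `x, y, z ∈ F_q`. -/
theorem knuth_td_symplectic
    (n : ℕ) (hn : Odd n) (hn0 : 0 < n)
    {F : Type*} [Field F] [Fintype F] (hF : Fintype.card F = 2 ^ n)
    (Tr : F → F) (hTr : ∀ x : F, Tr x = ∑ i ∈ Finset.range n, x ^ 2 ^ i)
    (smul : F → F → F)
    (hsmul : ∀ x y : F, smul x y = x * y + Tr x * y ^ 2 ^ (n - 1) + Tr (x ^ 2 * y)) :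
    ∀ x y z : F, Tr (x * smul y z) = Tr (y * smul x z) := by
  classical
  haveI hp2 : Fact (Nat.Prime 2) := ⟨Nat.prime_two⟩
  haveI hchar : CharP F 2 := by
    have h := ringChar.charP F
    have hprime : (ringChar F).Prime := CharP.char_is_prime F (ringChar F)
    have hdvd : ringChar F ∣ 2 ^ n := by
      rw [← hF]
      exact (CharP.cast_eq_zero_iff F (ringChar F) _).mp (FiniteField.cast_card_eq_zero F)
    have h2 : ringChar F = 2 :=
      (Nat.prime_dvd_prime_iff_eq hprime Nat.prime_two).mp (hprime.dvd_of_dvd_pow hdvd)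
    rwa [h2] at h
  have hq : ∀ a : F, a ^ 2 ^ n = a := fun a => by
    rw [← hF]; exact FiniteField.pow_card a
  have hshift : ∀ a : F, ∑ i ∈ Finset.range n, a ^ 2 ^ (i + 1) = Tr a := by
    intro a
    have h1 : ∑ i ∈ Finset.range (n + 1), a ^ 2 ^ i
        = (∑ i ∈ Finset.range n, a ^ 2 ^ (i + 1)) + a ^ 2 ^ 0 :=
      Finset.sum_range_succ' _ n
    have h2 : ∑ i ∈ Finset.range (n + 1), a ^ 2 ^ i
        = (∑ i ∈ Finset.range n, a ^ 2 ^ i) + a ^ 2 ^ n :=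
      Finset.sum_range_succ _ n
    have h3 : (∑ i ∈ Finset.range n, a ^ 2 ^ (i + 1)) + a
        = (∑ i ∈ Finset.range n, a ^ 2 ^ i) + a := by
      have := h1.symm.trans h2
      simpa [hq a] using this
    rw [hTr]
    exact add_right_cancel h3
  have Tr_sq : ∀ a : F, Tr (a ^ 2) = Tr a := fun a => by
    rw [hTr, ← hshift a]
    refine Finset.sum_congr rfl fun i _ => ?_
    rw [← pow_mul]
    congr 1
    rw [pow_succ, Nat.mul_comm]
  have sq_Tr : ∀ a : F, Tr a ^ 2 = Tr a := fun a => by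
    rw [← Tr_sq a]
    conv_lhs => rw [Tr_sq a]
    rw [hTr a, hTr (a ^ 2), sum_pow_char]
    refine Finset.sum_congr rfl fun i _ => ?_
    rw [← pow_mul, ← pow_mul, Nat.mul_comm]
  have idem_pow : ∀ (a : F) (i : ℕ), Tr a ^ 2 ^ i = Tr a := by
    intro a i
    induction i with
    | zero => simp
    | succ k ih => rw [pow_succ, pow_mul, ih, sq_Tr]
  have Tr_add : ∀ a b : F, Tr (a + b) = Tr a + Tr b := fun a b => by
    rw [hTr, hTr, hTr, ← Finset.sum_add_distrib]
    exact Finset.sum_congr rfl fun i _ => by rw [add_pow_char_pow]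
  have Tr_smul : ∀ a b : F, Tr (Tr a * b) = Tr a * Tr b := fun a b => by
    rw [hTr (Tr a * b), hTr b, Finset.mul_sum]
    exact Finset.sum_congr rfl fun i _ => by rw [mul_pow, idem_pow]
  have hroot : ∀ z : F, (z ^ 2 ^ (n - 1)) ^ 2 = z := fun z => by
    rw [← pow_mul, ← pow_succ, Nat.sub_add_cancel hn0, hq]
  have Tr_sqrt : ∀ x z : F, Tr (x * z ^ 2 ^ (n - 1)) = Tr (x ^ 2 * z) := fun x z => by
    rw [← Tr_sq (x * z ^ 2 ^ (n - 1)), mul_pow, hroot]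
  have key : ∀ x y z : F, Tr (x * smul y z)
      = Tr (x * (y * z)) + Tr y * Tr (x ^ 2 * z) + Tr (y ^ 2 * z) * Tr x := by
    intro x y z
    rw [hsmul, mul_add, mul_add, Tr_add, Tr_add]
    congr 1
    · congr 1
      rw [mul_left_comm, Tr_smul, Tr_sqrt]
    · rw [mul_comm, Tr_smul]
  intro x y z
  rw [key, key, mul_left_comm x y z]
  ring
end

section
/- Let n be an odd positive integer and q = 2^n. Let * be the Knuth binary presemifield multiplication and ∘ the symplectic Knuth presemifield multiplication on F_q. Then for all x, y, z ∈ F_q one has Tr(x·(z ∘ y) + y·(x * z)) = 0. (This orthogonality relation with respect to the alternating form ⟨(a,b),(c,d)⟩ = Tr(ad + bc) relates K_n to its Knuth derivative K_n^{td}.) -/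
/-- Orthogonality relation between the Knuth presemifield `K_n` (multiplication `*`)
and its Knuth derivative `K_n^{td}` (multiplication `∘`):
`Tr(x·(z ∘ y) + y·(x * z)) = 0` for all `x, y, z ∈ F_q`. -/
theorem knuth_orthogonality
    (n : ℕ) (hn : Odd n) (hn0 : 0 < n)
    {F : Type*} [Field F] [Fintype F] (hF : Fintype.card F = 2 ^ n)
    (Tr : F → F) (hTr : ∀ x : F, Tr x = ∑ i ∈ Finset.range n, x ^ 2 ^ i)
    (kmul : F → F → F)
    (hkmul : ∀ x y : F, kmul x y = x * y + (y * Tr x + x * Tr y) ^ 2)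
    (smul : F → F → F)
    (hsmul : ∀ x y : F, smul x y = x * y + Tr x * y ^ 2 ^ (n - 1) + Tr (x ^ 2 * y)) :
    ∀ x y z : F, Tr (x * smul z y + y * kmul x z) = 0 := by
  -- characteristic 2
  have h2 : (2 : F) = 0 := by
    have hc : ((Fintype.card F : ℕ) : F) = 0 := FiniteField.cast_card_eq_zero F
    rw [hF] at hc
    push_cast at hc
    exact pow_eq_zero_iff hn0.ne' |>.mp hc
  haveI : CharP F 2 := (CharP.charP_iff_prime_eq_zero Nat.prime_two).mpr h2
  -- basic facts
  have hpow_card : ∀ a : F, a ^ 2 ^ n = a := by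
    intro a
    rw [← hF]
    exact FiniteField.pow_card a
  have hTr0 : Tr 0 = 0 := by
    rw [hTr]
    apply Finset.sum_eq_zero
    intro i _
    exact zero_pow (pow_ne_zero i two_ne_zero)
  have hTradd : ∀ a b : F, Tr (a + b) = Tr a + Tr b := by
    intro a b
    rw [hTr, hTr, hTr, ← Finset.sum_add_distrib]
    apply Finset.sum_congr rfl
    intro i _
    exact add_pow_char_pow ..
  -- Tr(a^2) = (Tr a)^2
  have hTrsq' : ∀ a : F, Tr (a ^ 2) = Tr a ^ 2 := by
    intro a
    rw [hTr, hTr, sum_pow_char]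
    apply Finset.sum_congr rfl
    intro i _
    rw [← pow_mul, ← pow_mul, mul_comm]
  -- (Tr a)^2 = Tr a
  have hTrsq : ∀ a : F, Tr a ^ 2 = Tr a := by
    intro a
    have key : Tr a ^ 2 + a = Tr a + a := by
      have h1 : Tr a ^ 2 = ∑ i ∈ Finset.range n, a ^ 2 ^ (i + 1) := by
        rw [hTr, sum_pow_char]
        apply Finset.sum_congr rfl
        intro i _
        rw [← pow_mul, pow_succ]
      have h2' : ∑ i ∈ Finset.range (n + 1), a ^ 2 ^ i
          = (∑ i ∈ Finset.range n, a ^ 2 ^ (i + 1)) + a ^ 2 ^ 0 :=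
        Finset.sum_range_succ' _ n
      have h3 : ∑ i ∈ Finset.range (n + 1), a ^ 2 ^ i
          = (∑ i ∈ Finset.range n, a ^ 2 ^ i) + a ^ 2 ^ n :=
        Finset.sum_range_succ _ n
      have := h2'.symm.trans h3
      rw [pow_zero, pow_one, hpow_card, ← hTr a] at this
      rw [h1]
      exact this
    exact add_right_cancel key
  have hTr01 : ∀ a : F, Tr a = 0 ∨ Tr a = 1 := by
    intro a
    have h := hTrsq a
    have : Tr a * (Tr a - 1) = 0 := by ring_nf; linear_combination h
    rcases mul_eq_zero.mp this with h' | h'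
    · exact Or.inl h'
    · exact Or.inr (sub_eq_zero.mp h')
  have hTrsmul : ∀ a w : F, Tr (Tr a * w) = Tr a * Tr w := by
    intro a w
    rcases hTr01 a with h | h <;> rw [h]
    · rw [zero_mul, zero_mul, hTr0]
    · rw [one_mul, one_mul]
  -- Tr(x * y^(2^(n-1))) = Tr(x^2 * y)
  have hTrhalf : ∀ a b : F, Tr (a * b ^ 2 ^ (n - 1)) = Tr (a ^ 2 * b) := by
    intro a b
    have hexp : 2 ^ (n - 1) * 2 = 2 ^ n := by
      rw [← pow_succ, Nat.sub_add_cancel hn0]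
    have hsq : (a * b ^ 2 ^ (n - 1)) ^ 2 = a ^ 2 * b := by
      rw [mul_pow, ← pow_mul, hexp, hpow_card]
    rw [← hsq, hTrsq', hTrsq]
  intro x y z
  -- squares of traces
  have ex : Tr x ^ 2 = Tr x := hTrsq x
  have ez : Tr z ^ 2 = Tr z := hTrsq z
  have key : x * smul z y + y * kmul x z
      = Tr z * (x * y ^ 2 ^ (n - 1)) + Tr (z ^ 2 * y) * x
        + Tr x * (y * z ^ 2) + Tr z * (x ^ 2 * y) := by
    rw [hsmul, hkmul]
    linear_combination (x * y * z + x * y * z * Tr x * Tr z) * h2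
      + (y * z ^ 2) * ex + (y * x ^ 2) * ez
  rw [key, hTradd, hTradd, hTradd, hTrsmul, hTrsmul, hTrsmul, hTrsmul, hTrhalf]
  have hc : Tr (y * z ^ 2) = Tr (z ^ 2 * y) := by rw [mul_comm]
  rw [hc]
  linear_combination (Tr z * Tr (x ^ 2 * y) + Tr (z ^ 2 * y) * Tr x) * h2
end

section
/- Let n be an odd positive integer and q = 2^n. Let * be the Knuth binary presemifield multiplication and ∘ the symplectic Knuth presemifield multiplication on F_q. Let L : F_q → F_q and M : F_q → F_q be additive (F_2-linear) maps such that Tr(L(x)·y) = Tr(x·M(y)) for all x, y ∈ F_q (M is the adjoint of L with respect to the trace bilinear form). Then for every z ∈ F_q, the sets {x ∈ F_q : x * z + L(x) = 0} and {y ∈ F_q : z ∘ y + M(y) = 0} have the same cardinality. (This equality of kernel sizes expresses that L defines a translation hyperoval of type (a) in Π(K_n) if and only if the lines l_{m, M(m)}, m ∈ F_q, together with l_0 and l_∞ form a line hyperoval in Π(K_n^{td}).) -/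
/-- Theorem 3.1 (kernel-size correspondence, type (a)):
if `L` and `M` are additive maps on `F_q` that are adjoint with respect to the trace
bilinear form, i.e. `Tr(L(x)·y) = Tr(x·M(y))` for all `x, y`, then for every `z ∈ F_q`
the kernels `{x : x*z + L(x) = 0}` (Knuth multiplication `*`) and
`{y : z∘y + M(y) = 0}` (symplectic multiplication `∘`) have the same cardinality. -/
theorem kernel_size_correspondence_type_a
    (n : ℕ) (hn : Odd n) (hn0 : 0 < n)
    {F : Type*} [Field F] [Fintype F] (hF : Fintype.card F = 2 ^ n)
    (Tr : F → F) (hTr : ∀ x : F, Tr x = ∑ i ∈ Finset.range n, x ^ 2 ^ i)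
    (kmul : F → F → F)
    (hkmul : ∀ x y : F, kmul x y = x * y + (y * Tr x + x * Tr y) ^ 2)
    (smul : F → F → F)
    (hsmul : ∀ x y : F, smul x y = x * y + Tr x * y ^ 2 ^ (n - 1) + Tr (x ^ 2 * y))
    (L M : F → F)
    (hL : ∀ x y : F, L (x + y) = L x + L y)
    (hM : ∀ x y : F, M (x + y) = M x + M y)
    (hadj : ∀ x y : F, Tr (L x * y) = Tr (x * M y)) :
    ∀ z : F, ({x : F | kmul x z + L x = 0}).ncard
      = ({y : F | smul z y + M y = 0}).ncard := by
  classical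
  intro z
  -- characteristic 2
  have h2 : (2 : F) = 0 := by
    have hc : ((Fintype.card F : F)) = 0 := FiniteField.cast_card_eq_zero F
    rw [hF] at hc
    push_cast at hc
    exact pow_eq_zero_iff hn0.ne' |>.mp hc
  haveI : Fact (Nat.Prime 2) := ⟨Nat.prime_two⟩
  have hr : ringChar F = 2 := by
    apply CharP.ringChar_of_prime_eq_zero Nat.prime_two
    push_cast; exact h2
  haveI hchar : CharP F 2 := hr ▸ ringChar.charP F
  -- basic facts
  have hpowcard : ∀ x : F, x ^ 2 ^ n = x := fun x => by
    rw [← hF]; exact FiniteField.pow_card x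
  have hTadd : ∀ x y : F, Tr (x + y) = Tr x + Tr y := by
    intro x y
    rw [hTr, hTr, hTr, ← Finset.sum_add_distrib]
    exact Finset.sum_congr rfl fun i _ => add_pow_char_pow x y 2 i
  have hT0 : Tr 0 = 0 := by
    rw [hTr]
    refine Finset.sum_eq_zero fun i _ => ?_
    exact zero_pow (pow_ne_zero i two_ne_zero)
  have hT1 : Tr 1 = 1 := by
    rw [hTr]
    simp only [one_pow, Finset.sum_const, Finset.card_range, nsmul_eq_mul, mul_one]
    obtain ⟨k, hk⟩ := hn
    subst hk
    push_cast
    rw [h2]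
    ring
  have hTsq : ∀ x : F, Tr (x ^ 2) = Tr x := by
    intro x
    have key : Tr (x ^ 2) + x = Tr x + x := by
      have h1 : ∑ i ∈ Finset.range (n + 1), x ^ 2 ^ i
          = Tr (x ^ 2) + x := by
        rw [Finset.sum_range_succ', hTr]
        congr 1
        · exact Finset.sum_congr rfl fun i _ => by
            rw [← pow_mul, ← pow_succ']
        · rw [pow_zero, pow_one]
      have h2' : ∑ i ∈ Finset.range (n + 1), x ^ 2 ^ i
          = Tr x + x := by
        rw [Finset.sum_range_succ, hTr, hpowcard]
      rw [← h1, h2']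
    exact add_right_cancel key
  have hTsq2 : ∀ x : F, Tr x * Tr x = Tr x := by
    intro x
    have : Tr x * Tr x = Tr (x ^ 2) := by
      rw [hTr, hTr]
      have hfrob : (frobenius F 2) (∑ i ∈ Finset.range n, x ^ 2 ^ i)
          = ∑ i ∈ Finset.range n, (frobenius F 2) (x ^ 2 ^ i) := map_sum _ _ _
      simp only [frobenius_def] at hfrob
      calc (∑ i ∈ Finset.range n, x ^ 2 ^ i) * ∑ i ∈ Finset.range n, x ^ 2 ^ i
          = (∑ i ∈ Finset.range n, x ^ 2 ^ i) ^ 2 := (sq _).symm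
        _ = ∑ i ∈ Finset.range n, (x ^ 2 ^ i) ^ 2 := hfrob
        _ = ∑ i ∈ Finset.range n, (x ^ 2) ^ 2 ^ i := by
            refine Finset.sum_congr rfl fun i _ => ?_
            rw [← pow_mul, ← pow_mul, mul_comm]
    rw [this, hTsq]
  have hTidem : ∀ x : F, Tr x = 0 ∨ Tr x = 1 := by
    intro x
    have : Tr x * (Tr x - 1) = 0 := by
      have := hTsq2 x; linear_combination this
    rcases mul_eq_zero.mp this with h | h
    · exact Or.inl h
    · exact Or.inr (sub_eq_zero.mp h)
  have hTc : ∀ c u : F, (c = 0 ∨ c = 1) → Tr (c * u) = c * Tr u := by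
    rintro c u (rfl | rfl)
    · simp [hT0]
    · simp
  -- the key trace identity
  have hsqfree : ∀ a b : F, (a + b) ^ 2 = a ^ 2 + b ^ 2 := by
    intro a b
    linear_combination (a * b) * h2
  have hyhalf : ∀ x y : F, Tr (x * y ^ 2 ^ (n - 1)) = Tr (x ^ 2 * y) := by
    intro x y
    have harg : (x * y ^ 2 ^ (n - 1)) ^ 2 = x ^ 2 * y := by
      rw [mul_pow, ← pow_mul]
      congr 1
      have : 2 ^ (n - 1) * 2 = 2 ^ n := by
        rw [← pow_succ, Nat.sub_add_cancel hn0]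
      rw [this, hpowcard]
    rw [← harg, hTsq]
  have hkey : ∀ x y : F, Tr (kmul x z * y) = Tr (x * smul z y) := by
    intro x y
    have e1 : kmul x z * y = x * z * y + Tr x * (z ^ 2 * y) + Tr z * (x ^ 2 * y) := by
      rw [hkmul]
      have h1 := hTsq2 x
      have h2' := hTsq2 z
      linear_combination (y * z ^ 2) * h1 + (y * x ^ 2) * h2'
        + (x * z * Tr x * Tr z * y) * h2
    have e2 : x * smul z y = x * z * y + Tr z * (x * y ^ 2 ^ (n - 1)) + Tr (z ^ 2 * y) * x := by
      rw [hsmul]; ring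
    rw [e1, e2, hTadd, hTadd, hTadd, hTadd]
    rw [hTc _ _ (hTidem x), hTc _ _ (hTidem z), hTc _ _ (hTidem z),
        hTc _ _ (hTidem (z ^ 2 * y)), hyhalf]
    ring
  -- the character
  set ε : F → ℤ := fun t => if Tr t = 0 then 1 else -1 with hε
  have hEpsTr : ∀ s t : F, Tr s = Tr t → ε s = ε t := by
    intro s t h; simp only [hε, h]
  have hsum0 : ∑ t : F, ε t = 0 := by
    have hbij : ∑ t : F, ε (t + 1) = ∑ t : F, ε t :=
      Fintype.sum_equiv (Equiv.addRight 1) _ _ (fun t => rfl)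
    have hterm : ∀ t : F, ε t + ε (t + 1) = 0 := by
      intro t
      rcases hTidem t with h | h <;>
        simp [hε, hTadd, h, hT1, one_ne_zero, show (1:F)+1 = 0 by
          linear_combination h2]
    have : (2 : ℤ) * ∑ t : F, ε t = 0 := by
      have := Finset.sum_add_distrib (s := (Finset.univ : Finset F))
        (f := ε) (g := fun t => ε (t + 1))
      calc (2 : ℤ) * ∑ t : F, ε t
          = ∑ t : F, ε t + ∑ t : F, ε (t + 1) := by rw [hbij]; ring
        _ = ∑ t : F, (ε t + ε (t + 1)) := (Finset.sum_add_distrib).symm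
        _ = 0 := by simp [hterm]
    linarith
  have hinner : ∀ c : F, (∑ y : F, ε (c * y)) = if c = 0 then (Fintype.card F : ℤ) else 0 := by
    intro c
    by_cases hc : c = 0
    · subst hc
      simp [hε, hT0]
    · rw [if_neg hc]
      have : ∑ y : F, ε (c * y) = ∑ t : F, ε t :=
        Fintype.sum_equiv (Equiv.mulLeft₀ c hc) _ _ (fun t => rfl)
      rw [this, hsum0]
  -- the counting lemma
  have hcount : ∀ f : F → F,
      (∑ x : F, ∑ y : F, ε (f x * y))
        = (Fintype.card F : ℤ) * ({x : F | f x = 0}.ncard : ℤ) := by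
    intro f
    have h1 : (∑ x : F, ∑ y : F, ε (f x * y))
        = ∑ x : F, (if f x = 0 then (Fintype.card F : ℤ) else 0) :=
      Finset.sum_congr rfl fun x _ => hinner (f x)
    rw [h1, Finset.sum_ite, Finset.sum_const, Finset.sum_const_zero, add_zero,
      nsmul_eq_mul]
    have h2' : {x : F | f x = 0}.ncard
        = (Finset.univ.filter fun x => f x = 0).card := by
      rw [Set.ncard_eq_toFinset_card', Set.toFinset_setOf]
    rw [h2']
    push_cast
    ring
  -- put it together
  have hmain : (Fintype.card F : ℤ) * ({x : F | kmul x z + L x = 0}.ncard : ℤ)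
      = (Fintype.card F : ℤ) * ({y : F | smul z y + M y = 0}.ncard : ℤ) := by
    rw [← hcount (fun x => kmul x z + L x), ← hcount (fun y => smul z y + M y)]
    calc ∑ x : F, ∑ y : F, ε ((kmul x z + L x) * y)
        = ∑ x : F, ∑ y : F, ε (x * (smul z y + M y)) := by
          refine Finset.sum_congr rfl fun x _ => Finset.sum_congr rfl fun y _ => ?_
          apply hEpsTr
          rw [add_mul, mul_add, hTadd, hTadd, hkey, hadj]
      _ = ∑ y : F, ∑ x : F, ε (x * (smul z y + M y)) := Finset.sum_comm
      _ = ∑ y : F, ∑ x : F, ε ((smul z y + M y) * x) := by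
          refine Finset.sum_congr rfl fun y _ => Finset.sum_congr rfl fun x _ => ?_
          rw [mul_comm]
  have hcard_ne : (Fintype.card F : ℤ) ≠ 0 := by
    exact_mod_cast Fintype.card_ne_zero
  have := mul_left_cancel₀ hcard_ne hmain
  exact_mod_cast this
end

section
/- Let n be an odd positive integer, let d be a positive integer with gcd(d, n) = 1, and let q = 2^n. For y ∈ F_q with y ∉ {0,1}, one has y^{2^d} + y ≠ 0, and we may define μ(y) := y / (y^{2^d} + y) if Tr((y^{2^d} + y)·y) = 0, and μ(y) := (y+1) / (y^{2^d} + y) if Tr((y^{2^d} + y)·y) = 1. Then μ maps F_q \ {0,1} into F_q \ {0,1} and is a bijection of F_q \ {0,1} onto itself. -/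
section Aux

variable {F : Type*} [Field F] [CharP F 2]

private lemma char2_eq_of_add_eq_zero {x z : F} (h : x + z = 0) : x = z := by
  rw [add_eq_zero_iff_eq_neg.mp h, CharTwo.neg_eq]

private lemma frob_inj (k : ℕ) {x z : F} (h : x ^ 2 ^ k = z ^ 2 ^ k) : x = z := by
  have h2 : (x + z) ^ 2 ^ k = 0 := by
    rw [add_pow_char_pow, h, CharTwo.add_self_eq_zero]
  exact char2_eq_of_add_eq_zero (pow_eq_zero_iff (pow_ne_zero k two_ne_zero) |>.mp h2)

omit [CharP F 2] in
private lemma pow_pow_mul (a q : ℕ) {y : F} (h : y ^ 2 ^ a = y) :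
    y ^ 2 ^ (a * q) = y := by
  induction q with
  | zero => simp
  | succ q ih =>
      have : (2 : ℕ) ^ (a * (q + 1)) = 2 ^ (a * q) * 2 ^ a := by
        rw [← pow_add]; ring_nf
      rw [this, pow_mul, ih, h]

private lemma gcd_fix (a b : ℕ) {y : F} (ha : y ^ 2 ^ a = y) (hb : y ^ 2 ^ b = y) :
    y ^ 2 ^ Nat.gcd a b = y := by
  induction a, b using Nat.gcd.induction with
  | H0 b => simpa using hb
  | H1 a b hpos ih =>
      rw [Nat.gcd_rec]
      have hmod : y ^ 2 ^ (b % a) = y := by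
        have hdm : a * (b / a) + b % a = b := Nat.div_add_mod b a
        have h1 : (y ^ 2 ^ (b % a)) ^ 2 ^ (a * (b / a)) = y ^ 2 ^ (a * (b / a)) := by
          rw [← pow_mul, ← pow_add, Nat.add_comm, hdm, hb, pow_pow_mul a (b / a) ha]
        exact frob_inj _ h1
      exact ih hmod ha

end Aux

/-- The map `μ` from the proof of Theorem 4.1: for `y ∉ {0,1}` one has
`y^{2^d} + y ≠ 0`, and the map `μ` defined by `μ(y) = y/(y^{2^d}+y)` if
`Tr((y^{2^d}+y)·y) = 0` and `μ(y) = (y+1)/(y^{2^d}+y)` if `Tr((y^{2^d}+y)·y) = 1`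
is a bijection of `F_q \ {0,1}` onto itself. -/
theorem mu_bijective
    (n : ℕ) (hn : Odd n) (hn0 : 0 < n)
    (d : ℕ) (hd : 0 < d) (hdn : Nat.gcd d n = 1)
    {F : Type*} [Field F] [Fintype F] (hF : Fintype.card F = 2 ^ n)
    (Tr : F → F) (hTr : ∀ x : F, Tr x = ∑ i ∈ Finset.range n, x ^ 2 ^ i)
    (μ : F → F)
    (hμ0 : ∀ y : F, y ≠ 0 → y ≠ 1 → Tr ((y ^ 2 ^ d + y) * y) = 0 →
      μ y = y / (y ^ 2 ^ d + y))
    (hμ1 : ∀ y : F, y ≠ 0 → y ≠ 1 → Tr ((y ^ 2 ^ d + y) * y) = 1 →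
      μ y = (y + 1) / (y ^ 2 ^ d + y)) :
    (∀ y : F, y ≠ 0 → y ≠ 1 → y ^ 2 ^ d + y ≠ 0) ∧
    Set.BijOn μ (({0, 1} : Set F)ᶜ) (({0, 1} : Set F)ᶜ) := by
  -- characteristic 2
  haveI : CharP F (ringChar F) := ringChar.charP F
  haveI hchar2 : CharP F 2 := by
    obtain ⟨m, hp, hcard⟩ := FiniteField.card F (ringChar F)
    have hdvd : ringChar F ∣ 2 ^ n := by
      rw [← hF, hcard]
      exact dvd_pow_self _ (by positivity)
    have := Nat.Prime.dvd_of_dvd_pow hp hdvd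
    have h2 : ringChar F = 2 := (Nat.prime_dvd_prime_iff_eq hp Nat.prime_two).mp this
    rwa [h2] at ‹CharP F (ringChar F)›
  have hq : ∀ y : F, y ^ 2 ^ n = y := by
    intro y; rw [← hF]; exact FiniteField.pow_card y
  -- key: fixed points of x ↦ x^{2^d} are 0 and 1
  have key : ∀ t : F, t ^ 2 ^ d = t → t = 0 ∨ t = 1 := by
    intro t ht
    have hsq := gcd_fix d n ht (hq t)
    rw [hdn, pow_one, sq] at hsq
    have hmul : t * (t + 1) = 0 := by
      have h1 : (1 : F) + 1 = 0 := CharTwo.add_self_eq_zero 1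
      linear_combination hsq + t * h1
    rcases mul_eq_zero.mp hmul with h | h
    · exact Or.inl h
    · exact Or.inr (char2_eq_of_add_eq_zero h)
  -- Part 1
  have part1 : ∀ y : F, y ≠ 0 → y ≠ 1 → y ^ 2 ^ d + y ≠ 0 := by
    intro y hy0 hy1 h
    rcases key y (char2_eq_of_add_eq_zero h) with h' | h'
    exacts [hy0 h', hy1 h']
  -- trace lemmas
  have hTradd : ∀ a b : F, Tr (a + b) = Tr a + Tr b := by
    intro a b
    rw [hTr, hTr, hTr, ← Finset.sum_add_distrib]
    exact Finset.sum_congr rfl fun i _ => add_pow_char_pow ..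
  have hTrsq : ∀ x : F, Tr (x ^ 2) = Tr x := by
    intro x
    have hf : ∀ i : ℕ, (x ^ 2) ^ 2 ^ i = x ^ 2 ^ (i + 1) := by
      intro i; rw [← pow_mul, ← pow_succ']
    rw [hTr, hTr]
    calc ∑ i ∈ Finset.range n, (x ^ 2) ^ 2 ^ i
        = ∑ i ∈ Finset.range n, x ^ 2 ^ (i + 1) := Finset.sum_congr rfl fun i _ => hf i
      _ = ∑ i ∈ Finset.range n, x ^ 2 ^ i := by
          have h1 := Finset.sum_range_succ' (fun i => x ^ 2 ^ i) n
          have h2 := Finset.sum_range_succ (fun i => x ^ 2 ^ i) n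
          have h3 : (∑ i ∈ Finset.range n, x ^ 2 ^ (i + 1)) + x ^ 2 ^ 0
              = (∑ i ∈ Finset.range n, x ^ 2 ^ i) + x ^ 2 ^ n := by
            rw [← h1, h2]
          rw [hq x, pow_zero, pow_one] at h3
          exact add_right_cancel h3
  have hTrfrob : ∀ (k : ℕ) (x : F), Tr (x ^ 2 ^ k) = Tr x := by
    intro k
    induction k with
    | zero => simp
    | succ k ih =>
        intro x
        have hx : x ^ 2 ^ (k + 1) = (x ^ 2 ^ k) ^ 2 := by rw [← pow_mul, pow_succ]
        rw [hx, hTrsq, ih]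
  have hTr01 : ∀ x : F, Tr x = 0 ∨ Tr x = 1 := by
    intro x
    have h1 : Tr x ^ 2 = Tr (x ^ 2) := by
      rw [hTr, hTr, sum_pow_char]
      exact Finset.sum_congr rfl fun i _ => by rw [← pow_mul, ← pow_mul, mul_comm]
    have h2 : Tr x ^ 2 = Tr x := by rw [h1, hTrsq]
    have hmul : Tr x * (Tr x + 1) = 0 := by
      have h3 : (1 : F) + 1 = 0 := CharTwo.add_self_eq_zero 1
      linear_combination h2 + Tr x * h3
    rcases mul_eq_zero.mp hmul with h | h
    · exact Or.inl h
    · exact Or.inr (char2_eq_of_add_eq_zero h)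
  have hTrs : ∀ y : F, Tr (y ^ 2 ^ d + y) = 0 := by
    intro y
    rw [hTradd, hTrfrob, CharTwo.add_self_eq_zero]
  -- s is invariant under y ↦ y+1
  have hs_shift : ∀ y : F, (y + 1) ^ 2 ^ d + (y + 1) = y ^ 2 ^ d + y := by
    intro y
    rw [add_pow_char_pow, one_pow]
    have h1 : (1 : F) + 1 = 0 := CharTwo.add_self_eq_zero 1
    linear_combination h1
  -- injectivity of g : y ↦ y / (y^{2^d} + y)
  have ginj : ∀ a b : F, a ≠ 0 → a ≠ 1 → b ≠ 0 → b ≠ 1 →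
      a / (a ^ 2 ^ d + a) = b / (b ^ 2 ^ d + b) → a = b := by
    intro a b ha0 ha1 hb0 hb1 h
    have hsa := part1 a ha0 ha1
    have hsb := part1 b hb0 hb1
    rw [div_eq_div_iff hsa hsb] at h
    have hcross : a * b ^ 2 ^ d = b * a ^ 2 ^ d := by linear_combination h
    have ht : (b / a) ^ 2 ^ d = b / a := by
      rw [div_pow, div_eq_div_iff (pow_ne_zero _ ha0) ha0]
      linear_combination hcross
    rcases key _ ht with h' | h'
    · rcases div_eq_zero_iff.mp h' with h'' | h''
      exacts [absurd h'' hb0, absurd h'' ha0]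
    · exact ((div_eq_one_iff_eq ha0).mp h').symm
  -- membership simp
  have hmem : ∀ y : F, y ∈ (({0, 1} : Set F)ᶜ) ↔ y ≠ 0 ∧ y ≠ 1 := by
    intro y; simp [Set.mem_compl_iff, Set.mem_insert_iff, not_or]
  -- y+1 stays in the set
  have hshift_mem : ∀ y : F, y ≠ 0 → y ≠ 1 → (y + 1 ≠ 0 ∧ y + 1 ≠ 1) := by
    intro y hy0 hy1
    constructor
    · intro h; exact hy1 (char2_eq_of_add_eq_zero h)
    · intro h; exact hy0 (by simpa using h)
  -- MapsTo
  have hmaps : Set.MapsTo μ (({0, 1} : Set F)ᶜ) (({0, 1} : Set F)ᶜ) := by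
    intro y hy
    obtain ⟨hy0, hy1⟩ := (hmem y).mp hy
    have hs := part1 y hy0 hy1
    rw [hmem]
    rcases hTr01 ((y ^ 2 ^ d + y) * y) with h | h
    · rw [hμ0 y hy0 hy1 h]
      refine ⟨div_ne_zero hy0 hs, ?_⟩
      intro he
      have h1 : y = y ^ 2 ^ d + y := (div_eq_one_iff_eq hs).mp he
      have h0 : y ^ 2 ^ d = 0 := by linear_combination -h1
      exact hy0 (pow_eq_zero_iff (pow_ne_zero d two_ne_zero) |>.mp h0)
    · rw [hμ1 y hy0 hy1 h]
      obtain ⟨hys0, _⟩ := hshift_mem y hy0 hy1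
      refine ⟨div_ne_zero hys0 hs, ?_⟩
      intro he
      have h1 : y + 1 = y ^ 2 ^ d + y := (div_eq_one_iff_eq hs).mp he
      have h2 : y ^ 2 ^ d = 1 ^ 2 ^ d := by rw [one_pow]; linear_combination -h1
      exact hy1 (frob_inj d h2)
  -- InjOn
  have hinj : Set.InjOn μ (({0, 1} : Set F)ᶜ) := by
    intro a ha b hb hab
    obtain ⟨ha0, ha1⟩ := (hmem a).mp ha
    obtain ⟨hb0, hb1⟩ := (hmem b).mp hb
    obtain ⟨ha0', ha1'⟩ := hshift_mem a ha0 ha1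
    obtain ⟨hb0', hb1'⟩ := hshift_mem b hb0 hb1
    have hform : ∀ y : F, (y + 1) / (y ^ 2 ^ d + y)
        = (y + 1) / ((y + 1) ^ 2 ^ d + (y + 1)) := by
      intro y; rw [hs_shift]
    have hmix : ∀ y₁ y₂ : F, y₁ ≠ 0 → y₁ ≠ 1 → y₂ ≠ 0 → y₂ ≠ 1 →
        Tr ((y₁ ^ 2 ^ d + y₁) * y₁) = 0 → Tr ((y₂ ^ 2 ^ d + y₂) * y₂) = 1 →
        y₁ ≠ y₂ + 1 := by
      intro y₁ y₂ h10 h11 h20 h21 ht1 ht2 he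
      have hs2 := hs_shift y₂
      have hcontr : Tr ((y₁ ^ 2 ^ d + y₁) * y₁) = 1 := by
        rw [he, hs2]
        have hsplit : (y₂ ^ 2 ^ d + y₂) * (y₂ + 1)
            = (y₂ ^ 2 ^ d + y₂) * y₂ + (y₂ ^ 2 ^ d + y₂) := by ring
        rw [hsplit, hTradd, ht2, hTrs, add_zero]
      rw [ht1] at hcontr
      exact one_ne_zero hcontr.symm
    rcases hTr01 ((a ^ 2 ^ d + a) * a) with hta | hta <;>
      rcases hTr01 ((b ^ 2 ^ d + b) * b) with htb | htb
    · rw [hμ0 a ha0 ha1 hta, hμ0 b hb0 hb1 htb] at hab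
      exact ginj a b ha0 ha1 hb0 hb1 hab
    · rw [hμ0 a ha0 ha1 hta, hμ1 b hb0 hb1 htb, hform b] at hab
      have := ginj a (b + 1) ha0 ha1 hb0' hb1' hab
      exact absurd this (hmix a b ha0 ha1 hb0 hb1 hta htb)
    · rw [hμ1 a ha0 ha1 hta, hμ0 b hb0 hb1 htb, hform a] at hab
      have := (ginj (a + 1) b ha0' ha1' hb0 hb1 hab).symm
      exact absurd this (hmix b a hb0 hb1 ha0 ha1 htb hta)
    · rw [hμ1 a ha0 ha1 hta, hμ1 b hb0 hb1 htb, hform a, hform b] at hab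
      have := ginj (a + 1) (b + 1) ha0' ha1' hb0' hb1' hab
      exact add_right_cancel this
  exact ⟨part1, (Set.Finite.injOn_iff_bijOn_of_mapsTo (Set.toFinite _) hmaps).mp hinj⟩
end

section
/- Let n be a positive integer, q = 2^n, and let d, e be integers with 1 ≤ d, e ≤ n−1. Let a, b ∈ F_q. Then the identity (y^{2^d} + a + b)^{2^e} + (y^{2^d} + a + b) = y^{2^d} + y + a holds for all y ∈ F_q if and only if d + e = n and b^{2^d} + b = a. (This is the key step in proving that the hyperovals O_d and O_e of Π(K_n^{td}) are equivalent under a collineation interchanging the carrier points (0) and (1) only when e ≡ −d (mod n).) -/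
/-- Key step in Theorem 4.2 (point-interchanging shear case): for `1 ≤ d, e ≤ n-1` and
`a, b ∈ F_q`, the identity
`(y^{2^d} + a + b)^{2^e} + (y^{2^d} + a + b) = y^{2^d} + y + a` holds for all `y ∈ F_q`
if and only if `d + e = n` and `b^{2^d} + b = a`. -/
theorem equivalence_interchanging_shear
    (n : ℕ) (hn0 : 0 < n)
    {F : Type*} [Field F] [Fintype F] (hF : Fintype.card F = 2 ^ n)
    (d e : ℕ) (hd1 : 1 ≤ d) (hd2 : d ≤ n - 1) (he1 : 1 ≤ e) (he2 : e ≤ n - 1)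
    (a b : F) :
    (∀ y : F, (y ^ 2 ^ d + a + b) ^ 2 ^ e + (y ^ 2 ^ d + a + b) = y ^ 2 ^ d + y + a) ↔
      (d + e = n ∧ b ^ 2 ^ d + b = a) := by
  have hn2 : 2 ≤ n := by omega
  -- characteristic 2
  have hcast : ((Fintype.card F : ℕ) : F) = 0 := FiniteField.cast_card_eq_zero F
  rw [hF] at hcast
  push_cast at hcast
  have h2 : (2:F) = 0 := by
    exact pow_eq_zero_iff (by omega) |>.mp hcast
  have hrc : ringChar F = 2 := by
    have hd := ringChar.dvd (show ((2:ℕ):F) = 0 by exact_mod_cast h2)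
    rcases (Nat.dvd_prime Nat.prime_two).mp hd with h | h
    · exfalso
      haveI := ringChar.of_eq h
      exact one_ne_zero (show (1:F) = 0 by exact_mod_cast CharP.cast_eq_zero F 1)
    · exact h
  haveI : CharP F 2 := ringChar.of_eq hrc
  haveI : Fact (Nat.Prime 2) := ⟨Nat.prime_two⟩
  have hpowadd : ∀ (x y : F) (k : ℕ), (x + y) ^ (2:ℕ) ^ k = x ^ (2:ℕ)^k + y ^ (2:ℕ)^k := by
    intro x y k
    exact add_pow_char_pow x y 2 k
  have hyn : ∀ y : F, y ^ (2:ℕ)^n = y := by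
    intro y; rw [← hF]; exact FiniteField.pow_card y
  have hdvd : ∀ k : ℕ, (∀ y : F, y ^ 2^k = y) → (2^n - 1) ∣ (2^k - 1) := by
    intro k hk
    rw [← hF]
    refine (FiniteField.forall_pow_eq_one_iff (K := F) _).mp ?_
    intro x
    have hx' : x ^ (2:ℕ)^k = x := by
      ext
      push_cast
      exact hk x
    have h6 : x ^ ((2:ℕ)^k - 1) * x = 1 * x := by
      rw [← pow_succ, Nat.sub_add_cancel Nat.one_le_two_pow, hx', one_mul]
    exact mul_right_cancel h6
  constructor
  · intro h
    have h0 := h 0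
    rw [zero_pow (by positivity)] at h0
    have hc : (a + b) ^ (2:ℕ)^e = b := by
      have h1 : (0 + a + b) = a + b := by ring
      rw [h1] at h0
      linear_combination h0 - b * h2
    have key : ∀ y : F, y ^ (2:ℕ)^(d+e) = y := by
      intro y
      have h1 := h y
      have hx : (y ^ (2:ℕ)^d + a + b) = y^(2:ℕ)^d + (a+b) := by ring
      rw [hx, hpowadd, hc, ← pow_mul, ← pow_add] at h1
      linear_combination h1 - b * h2
    set m := d + e with hm
    have hdvd1 := hdvd m key
    have hnm : n ≤ m := by
      have hle : (2:ℕ)^n - 1 ≤ 2^m - 1 := Nat.le_of_dvd (by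
        have : (2:ℕ)^1 ≤ 2^m := Nat.pow_le_pow_right (by norm_num) (by omega)
        omega) hdvd1
      have h1n : (1:ℕ) ≤ 2^n := Nat.one_le_two_pow
      have h1m : (1:ℕ) ≤ 2^m := Nat.one_le_two_pow
      have : (2:ℕ)^n ≤ 2^m := by omega
      exact (Nat.pow_le_pow_iff_right (by norm_num)).mp this
    have hr : m - n = 0 := by
      by_contra hr0
      set r := m - n with hrdef
      have hyr : ∀ y : F, y ^ (2:ℕ)^r = y := by
        intro y
        have h5 : (2:ℕ)^m = 2^n * 2^r := by rw [← pow_add]; congr 1; omega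
        have hk := key y
        rw [h5, pow_mul, hyn y] at hk
        exact hk
      have hdvd2 := hdvd r hyr
      have hle : (2:ℕ)^n - 1 ≤ 2^r - 1 := Nat.le_of_dvd (by
        have : (2:ℕ)^1 ≤ 2^r := Nat.pow_le_pow_right (by norm_num) (by omega)
        omega) hdvd2
      have h1n : (1:ℕ) ≤ 2^n := Nat.one_le_two_pow
      have h1r : (1:ℕ) ≤ 2^r := Nat.one_le_two_pow
      have hnr : n ≤ r := (Nat.pow_le_pow_iff_right (show 1 < 2 by norm_num)).mp (show (2:ℕ)^n ≤ 2^r by omega)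
      omega
    have hmn : m = n := by omega
    refine ⟨hmn, ?_⟩
    have h7 : ((a+b) ^ (2:ℕ)^e) ^ (2:ℕ)^d = b ^ (2:ℕ)^d := by rw [hc]
    rw [← pow_mul, ← pow_add] at h7
    have h8 : e + d = n := by omega
    rw [h8, hyn] at h7
    linear_combination -h7 + b * h2
  · rintro ⟨hde, hb⟩ y
    have h3 : y ^ (2:ℕ)^d + a + b = (y + b) ^ (2:ℕ)^d := by
      rw [hpowadd]
      linear_combination -hb + b * h2
    rw [h3, ← pow_mul, ← pow_add, hde, hyn, hpowadd]
    linear_combination hb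
end

section
/- Let Π be a finite projective plane of even order q, and let O₁ and O₂ be hyperovals of Π whose intersection consists of exactly two points P and Q (P ≠ Q). Then the number of lines of Π which are secant to both O₁ and O₂ and do not pass through P equals q²/4 + q/2. -/
theorem hyperoval_line_card
    {P L : Type*} [Fintype P] [Fintype L]
    {Inc : P → L → Prop} {q : ℕ}
    (hpoint : ∀ p : P, ({l : L | Inc p l}).ncard = q + 1)
    (hjoin : ∀ p₁ p₂ : P, p₁ ≠ p₂ → ∃! l : L, Inc p₁ l ∧ Inc p₂ l)
    {O : Set P} (hOcard : O.ncard = q + 2)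
    (hOarc : ∀ p₁ p₂ p₃ : P, p₁ ∈ O → p₂ ∈ O → p₃ ∈ O →
      p₁ ≠ p₂ → p₁ ≠ p₃ → p₂ ≠ p₃ → ¬ ∃ l : L, Inc p₁ l ∧ Inc p₂ l ∧ Inc p₃ l)
    {x : P} (hx : x ∈ O) {l : L} (hl : Inc x l) :
    ({p : P | p ∈ O ∧ Inc p l}).ncard = 2 := by
  classical
  set f : P → L := fun y => if h : x ≠ y then (hjoin x y h).choose else l with hf
  have hf1 : ∀ y, (h : x ≠ y) → Inc x (f y) ∧ Inc y (f y) := by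
    intro y h; simp only [hf, dif_pos h]; exact (hjoin x y h).choose_spec.1
  have hf2 : ∀ y, (h : x ≠ y) → ∀ l', Inc x l' → Inc y l' → f y = l' := by
    intro y h l' h1 h2
    simp only [hf, dif_pos h]
    exact ((hjoin x y h).choose_spec.2 l' ⟨h1, h2⟩).symm
  set s : Finset P := (O \ {x}).toFinset with hs
  set t : Finset L := ({l' : L | Inc x l'}).toFinset with ht
  have hscard : s.card = q + 1 := by
    rw [hs, ← Set.ncard_eq_toFinset_card', Set.ncard_diff_singleton_of_mem hx, hOcard]; omega
  have htcard : t.card = q + 1 := by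
    rw [ht, ← Set.ncard_eq_toFinset_card', hpoint x]
  have hmem : ∀ y ∈ s, y ∈ O ∧ y ≠ x := by
    intro y hy
    rw [hs, Set.mem_toFinset] at hy
    exact ⟨hy.1, hy.2⟩
  have hmaps : ∀ y ∈ s, f y ∈ t := by
    intro y hy
    rw [ht, Set.mem_toFinset]
    exact (hf1 y (hmem y hy).2.symm).1
  have hinj : Set.InjOn f s := by
    intro y hy y' hy' hfe
    by_contra hne
    obtain ⟨hyO, hyx⟩ := hmem y hy
    obtain ⟨hy'O, hy'x⟩ := hmem y' hy'
    exact hOarc y y' x hyO hy'O hx hne hyx hy'x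
      ⟨f y, (hf1 y hyx.symm).2, hfe ▸ (hf1 y' hy'x.symm).2, (hf1 y hyx.symm).1⟩
  have himage : s.image f = t := by
    apply Finset.eq_of_subset_of_card_le
    · intro l' hl'
      obtain ⟨y, hy, rfl⟩ := Finset.mem_image.mp hl'
      exact hmaps y hy
    · rw [htcard, Finset.card_image_of_injOn hinj, hscard]
  have hlt : l ∈ t := by rw [ht, Set.mem_toFinset]; exact hl
  rw [← himage] at hlt
  obtain ⟨y, hy, hfy⟩ := Finset.mem_image.mp hlt
  obtain ⟨hyO, hyx⟩ := hmem y hy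
  have hyl : Inc y l := hfy ▸ (hf1 y hyx.symm).2
  have : {p : P | p ∈ O ∧ Inc p l} = {x, y} := by
    ext p
    simp only [Set.mem_setOf_eq, Set.mem_insert_iff, Set.mem_singleton_iff]
    constructor
    · rintro ⟨hpO, hpl⟩
      by_contra hne
      push_neg at hne
      exact hOarc x y p hx hyO hpO hyx.symm (Ne.symm hne.1) (Ne.symm hne.2) ⟨l, hl, hyl, hpl⟩
    · rintro (rfl | rfl)
      · exact ⟨hx, hl⟩
      · exact ⟨hyO, hyl⟩
  rw [this, Set.ncard_pair hyx.symm]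

theorem external_secants
    {P L : Type*} [Fintype P] [Fintype L]
    {Inc : P → L → Prop} {q : ℕ}
    (hpoint : ∀ p : P, ({l : L | Inc p l}).ncard = q + 1)
    (hjoin : ∀ p₁ p₂ : P, p₁ ≠ p₂ → ∃! l : L, Inc p₁ l ∧ Inc p₂ l)
    {O : Set P} (hOcard : O.ncard = q + 2)
    (hOarc : ∀ p₁ p₂ p₃ : P, p₁ ∈ O → p₂ ∈ O → p₃ ∈ O →
      p₁ ≠ p₂ → p₁ ≠ p₃ → p₂ ≠ p₃ → ¬ ∃ l : L, Inc p₁ l ∧ Inc p₂ l ∧ Inc p₃ l)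
    {x : P} (hx : x ∉ O) :
    2 * ({l : L | Inc x l ∧ ({p : P | p ∈ O ∧ Inc p l}).ncard = 2}).ncard = q + 2 := by
  classical
  have hLne : Nonempty L := by
    have h := hpoint x
    have : ({l : L | Inc x l}).Nonempty := by
      apply Set.nonempty_of_ncard_ne_zero; omega
    exact ⟨this.choose⟩
  obtain ⟨l₀⟩ := hLne
  set f : P → L := fun y => if h : x ≠ y then (hjoin x y h).choose else l₀ with hf
  have hf1 : ∀ y, (h : x ≠ y) → Inc x (f y) ∧ Inc y (f y) := by
    intro y h; simp only [hf, dif_pos h]; exact (hjoin x y h).choose_spec.1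
  have hf2 : ∀ y, (h : x ≠ y) → ∀ l', Inc x l' → Inc y l' → f y = l' := by
    intro y h l' h1 h2
    simp only [hf, dif_pos h]
    exact ((hjoin x y h).choose_spec.2 l' ⟨h1, h2⟩).symm
  have hxne : ∀ y ∈ O, x ≠ y := fun y hy h => hx (h ▸ hy)
  set s : Finset P := O.toFinset with hs
  have hscard : s.card = q + 2 := by rw [hs, ← Set.ncard_eq_toFinset_card', hOcard]
  set t : Finset L := s.image f with ht
  have htmem : ∀ l : L, l ∈ t ↔ (Inc x l ∧ ({p : P | p ∈ O ∧ Inc p l}).ncard = 2) := by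
    intro l
    constructor
    · intro hl
      obtain ⟨y, hy, rfl⟩ := Finset.mem_image.mp hl
      rw [hs, Set.mem_toFinset] at hy
      have hxy := hxne y hy
      exact ⟨(hf1 y hxy).1,
        hyperoval_line_card hpoint hjoin hOcard hOarc hy (hf1 y hxy).2⟩
    · rintro ⟨hxl, hcard⟩
      have : ({p : P | p ∈ O ∧ Inc p l}).Nonempty := by
        apply Set.nonempty_of_ncard_ne_zero; omega
      obtain ⟨p, hpO, hpl⟩ := this
      refine Finset.mem_image.mpr ⟨p, ?_, hf2 p (hxne p hpO) l hxl hpl⟩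
      rw [hs, Set.mem_toFinset]; exact hpO
  have hfibcard : ∀ l ∈ t, (s.filter (fun p => f p = l)).card = 2 := by
    intro l hl
    have hxl : Inc x l := ((htmem l).mp hl).1
    have hfib : s.filter (fun p => f p = l) = ({p : P | p ∈ O ∧ Inc p l}).toFinset := by
      ext p
      simp only [Finset.mem_filter, hs, Set.mem_toFinset, Set.mem_setOf_eq]
      constructor
      · rintro ⟨hpO, rfl⟩
        exact ⟨hpO, (hf1 p (hxne p hpO)).2⟩
      · rintro ⟨hpO, hpl⟩
        exact ⟨hpO, hf2 p (hxne p hpO) l hxl hpl⟩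
    rw [hfib, ← Set.ncard_eq_toFinset_card', ((htmem l).mp hl).2]
  have hcount : s.card = 2 * t.card := by
    rw [Finset.card_eq_sum_card_image f s, ← ht,
        Finset.sum_congr rfl hfibcard, Finset.sum_const, smul_eq_mul, mul_comm]
  have hset : {l : L | Inc x l ∧ ({p : P | p ∈ O ∧ Inc p l}).ncard = 2} = ↑t := by
    ext l; simp only [Set.mem_setOf_eq, Finset.coe_sort_coe, Finset.mem_coe, htmem l]
  rw [hset, Set.ncard_coe_finset, ← hcount, hscard]

theorem external_secants_avoid
    {P L : Type*} [Fintype P] [Fintype L]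
    {Inc : P → L → Prop} {q : ℕ}
    (hpoint : ∀ p : P, ({l : L | Inc p l}).ncard = q + 1)
    (hjoin : ∀ p₁ p₂ : P, p₁ ≠ p₂ → ∃! l : L, Inc p₁ l ∧ Inc p₂ l)
    {O : Set P} (hOcard : O.ncard = q + 2)
    (hOarc : ∀ p₁ p₂ p₃ : P, p₁ ∈ O → p₂ ∈ O → p₃ ∈ O →
      p₁ ≠ p₂ → p₁ ≠ p₃ → p₂ ≠ p₃ → ¬ ∃ l : L, Inc p₁ l ∧ Inc p₂ l ∧ Inc p₃ l)
    {x p₀ : P} (hx : x ∉ O) (hp₀ : p₀ ∈ O) (hxp : x ≠ p₀) :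
    2 * ({l : L | Inc x l ∧ ({p : P | p ∈ O ∧ Inc p l}).ncard = 2 ∧ ¬ Inc p₀ l}).ncard
      = q := by
  classical
  obtain ⟨⟨hl₁x, hl₁p⟩, huniq⟩ := (hjoin x p₀ hxp).choose_spec
  set l₁ : L := (hjoin x p₀ hxp).choose with hl₁
  have hall := external_secants hpoint hjoin hOcard hOarc hx
  have hl₁mem : l₁ ∈ {l : L | Inc x l ∧ ({p : P | p ∈ O ∧ Inc p l}).ncard = 2} :=
    ⟨hl₁x, hyperoval_line_card hpoint hjoin hOcard hOarc hp₀ hl₁p⟩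
  have hset : {l : L | Inc x l ∧ ({p : P | p ∈ O ∧ Inc p l}).ncard = 2 ∧ ¬ Inc p₀ l}
      = {l : L | Inc x l ∧ ({p : P | p ∈ O ∧ Inc p l}).ncard = 2} \ {l₁} := by
    ext l
    simp only [Set.mem_setOf_eq, Set.mem_diff, Set.mem_singleton_iff]
    constructor
    · rintro ⟨h1, h2, h3⟩
      refine ⟨⟨h1, h2⟩, fun h => h3 (h ▸ hl₁p)⟩
    · rintro ⟨⟨h1, h2⟩, h3⟩
      refine ⟨h1, h2, fun hp => h3 ((huniq l ⟨h1, hp⟩))⟩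
  rw [hset, Set.ncard_diff_singleton_of_mem hl₁mem]
  omega



/-- Lemma 5.1, equation (5.2): let `Π` be a finite projective plane of even order `q`,
and let `O₁`, `O₂` be hyperovals of `Π` meeting in exactly the two points `P ≠ Q`.
Then the number of lines secant to both `O₁` and `O₂` and not through `P` is
`q²/4 + q/2`. -/
theorem common_secant_lines_avoiding_point
    {P L : Type*} [Fintype P] [Fintype L]
    (Inc : P → L → Prop) (q : ℕ) (hq : Even q)
    (hline : ∀ l : L, ({p : P | Inc p l}).ncard = q + 1)
    (hpoint : ∀ p : P, ({l : L | Inc p l}).ncard = q + 1)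
    (hjoin : ∀ p₁ p₂ : P, p₁ ≠ p₂ → ∃! l : L, Inc p₁ l ∧ Inc p₂ l)
    (hmeet : ∀ l₁ l₂ : L, l₁ ≠ l₂ → ∃! p : P, Inc p l₁ ∧ Inc p l₂)
    (O₁ O₂ : Set P)
    (hO₁card : O₁.ncard = q + 2)
    (hO₁arc : ∀ p₁ p₂ p₃ : P, p₁ ∈ O₁ → p₂ ∈ O₁ → p₃ ∈ O₁ →
      p₁ ≠ p₂ → p₁ ≠ p₃ → p₂ ≠ p₃ → ¬ ∃ l : L, Inc p₁ l ∧ Inc p₂ l ∧ Inc p₃ l)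
    (hO₂card : O₂.ncard = q + 2)
    (hO₂arc : ∀ p₁ p₂ p₃ : P, p₁ ∈ O₂ → p₂ ∈ O₂ → p₃ ∈ O₂ →
      p₁ ≠ p₂ → p₁ ≠ p₃ → p₂ ≠ p₃ → ¬ ∃ l : L, Inc p₁ l ∧ Inc p₂ l ∧ Inc p₃ l)
    (p₀ q₀ : P) (hpq : p₀ ≠ q₀) (hinter : O₁ ∩ O₂ = {p₀, q₀}) :
    ({l : L | ({p : P | p ∈ O₁ ∧ Inc p l}).ncard = 2 ∧
        ({p : P | p ∈ O₂ ∧ Inc p l}).ncard = 2 ∧ ¬ Inc p₀ l}).ncard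
      = q ^ 2 / 4 + q / 2 := by
  classical
  have hp₀O₁ : p₀ ∈ O₁ := by
    have : p₀ ∈ O₁ ∩ O₂ := by rw [hinter]; left; rfl
    exact this.1
  have hp₀O₂ : p₀ ∈ O₂ := by
    have : p₀ ∈ O₁ ∩ O₂ := by rw [hinter]; left; rfl
    exact this.2
  have hq₀O₁ : q₀ ∈ O₁ := by
    have : q₀ ∈ O₁ ∩ O₂ := by rw [hinter]; right; rfl
    exact this.1
  have hq₀O₂ : q₀ ∈ O₂ := by
    have : q₀ ∈ O₁ ∩ O₂ := by rw [hinter]; right; rfl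
    exact this.2
  set S : Finset L := ({l : L | ({p : P | p ∈ O₁ ∧ Inc p l}).ncard = 2 ∧
      ({p : P | p ∈ O₂ ∧ Inc p l}).ncard = 2 ∧ ¬ Inc p₀ l}).toFinset with hS
  rw [Set.ncard_eq_toFinset_card', ← hS]
  have hSmem : ∀ l : L, l ∈ S ↔ (({p : P | p ∈ O₁ ∧ Inc p l}).ncard = 2 ∧
      ({p : P | p ∈ O₂ ∧ Inc p l}).ncard = 2 ∧ ¬ Inc p₀ l) := by
    intro l; rw [hS, Set.mem_toFinset]; rfl
  set A : Finset P := (O₂ \ {p₀}).toFinset with hA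
  -- double counting
  have key : ∑ x ∈ A, (S.filter (fun l => Inc x l)).card = 2 * S.card := by
    have h1 : ∀ x ∈ A, (S.filter (fun l => Inc x l)).card
        = ∑ l ∈ S, (if Inc x l then 1 else 0) := by
      intro x _; rw [Finset.card_filter]
    rw [Finset.sum_congr rfl h1, Finset.sum_comm]
    have h2 : ∀ l ∈ S, ∑ x ∈ A, (if Inc x l then 1 else 0) = 2 := by
      intro l hl
      obtain ⟨h1', h2', h3'⟩ := (hSmem l).mp hl
      rw [← Finset.card_filter]
      have : A.filter (fun x => Inc x l) = ({p : P | p ∈ O₂ ∧ Inc p l}).toFinset := by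
        ext p
        simp only [Finset.mem_filter, hA, Set.mem_toFinset, Set.mem_diff,
          Set.mem_singleton_iff, Set.mem_setOf_eq]
        constructor
        · rintro ⟨⟨hpO, _⟩, hpl⟩; exact ⟨hpO, hpl⟩
        · rintro ⟨hpO, hpl⟩
          exact ⟨⟨hpO, fun h => h3' (h ▸ hpl)⟩, hpl⟩
      rw [this, ← Set.ncard_eq_toFinset_card', h2']
    rw [Finset.sum_congr rfl h2, Finset.sum_const, smul_eq_mul, mul_comm]
  -- split A = insert q₀ B
  set B : Finset P := (O₂ \ {p₀, q₀}).toFinset with hB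
  have hq₀B : q₀ ∉ B := by
    rw [hB, Set.mem_toFinset]; intro h; exact h.2 (Or.inr rfl)
  have hAB : A = insert q₀ B := by
    ext p
    simp only [hA, hB, Set.mem_toFinset, Set.mem_diff, Set.mem_singleton_iff,
      Finset.mem_insert, Set.mem_insert_iff]
    constructor
    · rintro ⟨hpO, hpp⟩
      by_cases h : p = q₀
      · exact Or.inl h
      · exact Or.inr ⟨hpO, fun hc => hc.elim hpp h⟩
    · rintro (rfl | ⟨hpO, hpp⟩)
      · exact ⟨hq₀O₂, hpq.symm⟩
      · exact ⟨hpO, fun h => hpp (Or.inl h)⟩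
  have hBcard : B.card = q := by
    have : O₂ \ {p₀, q₀} = (O₂ \ {p₀}) \ {q₀} := by
      ext p; simp only [Set.mem_diff, Set.mem_insert_iff, Set.mem_singleton_iff]; tauto
    rw [hB, ← Set.ncard_eq_toFinset_card', this,
      Set.ncard_diff_singleton_of_mem (by exact ⟨hq₀O₂, hpq.symm⟩),
      Set.ncard_diff_singleton_of_mem hp₀O₂, hO₂card]
    omega
  -- count for q₀
  have hcq₀ : (S.filter (fun l => Inc q₀ l)).card = q := by
    obtain ⟨⟨hl₁p, hl₁q⟩, huniq⟩ := (hjoin p₀ q₀ hpq).choose_spec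
    set l₁ : L := (hjoin p₀ q₀ hpq).choose with hl₁
    have hset : S.filter (fun l => Inc q₀ l)
        = ({l : L | Inc q₀ l} \ {l₁}).toFinset := by
      ext l
      simp only [Finset.mem_filter, Set.mem_toFinset, Set.mem_diff,
        Set.mem_singleton_iff, hSmem l]
      constructor
      · rintro ⟨⟨_, _, h3'⟩, hql⟩
        exact ⟨hql, fun h => h3' (h ▸ hl₁p)⟩
      · rintro ⟨hql, hne⟩
        refine ⟨⟨?_, ?_, fun hp => hne (huniq l ⟨hp, hql⟩)⟩, hql⟩
        · exact hyperoval_line_card hpoint hjoin hO₁card hO₁arc hq₀O₁ hql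
        · exact hyperoval_line_card hpoint hjoin hO₂card hO₂arc hq₀O₂ hql
    rw [hset, ← Set.ncard_eq_toFinset_card',
      Set.ncard_diff_singleton_of_mem (show l₁ ∈ {l : L | Inc q₀ l} from hl₁q),
      hpoint q₀]
    omega
  -- count for x in B
  have hcB : ∀ x ∈ B, 2 * (S.filter (fun l => Inc x l)).card = q := by
    intro x hxB
    rw [hB, Set.mem_toFinset] at hxB
    obtain ⟨hxO₂, hxne⟩ := hxB
    have hxO₁ : x ∉ O₁ := by
      intro h
      have : x ∈ O₁ ∩ O₂ := ⟨h, hxO₂⟩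
      rw [hinter] at this
      exact hxne this
    have hxp₀ : x ≠ p₀ := fun h => hxne (Or.inl h)
    have hset : S.filter (fun l => Inc x l)
        = ({l : L | Inc x l ∧ ({p : P | p ∈ O₁ ∧ Inc p l}).ncard = 2
            ∧ ¬ Inc p₀ l}).toFinset := by
      ext l
      simp only [Finset.mem_filter, Set.mem_toFinset, Set.mem_setOf_eq, hSmem l]
      constructor
      · rintro ⟨⟨h1', h2', h3'⟩, hxl⟩
        exact ⟨hxl, h1', h3'⟩
      · rintro ⟨hxl, h1', h3'⟩
        exact ⟨⟨h1',
          hyperoval_line_card hpoint hjoin hO₂card hO₂arc hxO₂ hxl, h3'⟩, hxl⟩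
    rw [hset, ← Set.ncard_eq_toFinset_card']
    exact external_secants_avoid hpoint hjoin hO₁card hO₁arc hxO₁ hp₀O₁ hxp₀
  -- combine
  have hsum : 2 * ∑ x ∈ A, (S.filter (fun l => Inc x l)).card = 2 * q + q * q := by
    rw [hAB, Finset.sum_insert hq₀B, hcq₀, Nat.mul_add, Finset.mul_sum,
      Finset.sum_congr rfl hcB, Finset.sum_const, smul_eq_mul, hBcard]
  rw [key] at hsum
  obtain ⟨m, hm⟩ := hq
  have hq2 : q * q = 4 * (m * m) := by subst hm; ring
  rw [pow_two]
  omega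
end

section
/- Let F be a finite field of characteristic 2 with q elements. Let ⋆ : F × F → F be additive in each argument and such that for every nonzero c ∈ F the map x ↦ x⋆c is a bijection of F. Let f : F → F be an additive bijection. Model the points of the presemifield plane as the disjoint union of the affine points F × F and the points at infinity F ∪ {∞}, and for (c,e) ∈ F × F set O_{c,e} := {(x, f(x) + x⋆c + e) : x ∈ F} ∪ {(c), (∞)} (where (c) denotes the point at infinity labelled by c). Then the q² sets O_{c,e} are pairwise distinct, and any two distinct sets O_{c,e} and O_{c',e'} intersect in exactly two points, one of which is (∞). -/
/-- The image of the translation hyperoval `O = {(x, f(x))} ∪ {(0), (∞)}` of type (a)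
under the collineation `σ_c ∘ τ_{a,b}` of the presemifield plane: affine points
`(x, f(x) + x⋆c + e)`, plus the points at infinity `(c)` and `(∞)`.  Points of the
plane are modelled as `(F × F) ⊕ Option F`, where `Sum.inr (some c)` is the point at
infinity `(c)` and `Sum.inr none` is `(∞)`. -/
def ovalOrbitSet {F : Type*} [Field F] (star : F → F → F) (f : F → F) (c e : F) :
    Set ((F × F) ⊕ Option F) :=
  {p | ∃ x : F, p = Sum.inl (x, f x + star x c + e)} ∪
    {Sum.inr (some c), Sum.inr none}

/-- Lemma 5.2: let `F` be a finite field of characteristic `2` with `q` elements,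
`⋆` a biadditive multiplication whose right multiplications by nonzero elements are
bijective, and `f` an additive bijection.  Then the `q²` images `O_{c,e}` of the
translation hyperoval `O = {(x, f(x))} ∪ {(0), (∞)}` under the group generated by
translations and shears are pairwise distinct, and any two distinct ones intersect in
exactly two points, one of which is `(∞)`. -/
theorem oval_orbit_pairwise_two_points
    {F : Type*} [Field F] [Fintype F] [CharP F 2]
    (star : F → F → F)
    (hstar_left : ∀ a b c : F, star (a + b) c = star a c + star b c)
    (hstar_right : ∀ a b c : F, star a (b + c) = star a b + star a c)
    (hstar_bij : ∀ c : F, c ≠ 0 → Function.Bijective (fun x : F => star x c))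
    (f : F → F)
    (hf_add : ∀ x y : F, f (x + y) = f x + f y)
    (hf_bij : Function.Bijective f) :
    (∀ c e c' e' : F, ovalOrbitSet star f c e = ovalOrbitSet star f c' e' →
      c = c' ∧ e = e') ∧
    (∀ c e c' e' : F, (c, e) ≠ (c', e') →
      (ovalOrbitSet star f c e ∩ ovalOrbitSet star f c' e').ncard = 2 ∧
      Sum.inr none ∈ ovalOrbitSet star f c e ∩ ovalOrbitSet star f c' e') := by
  have htwo : ∀ a : F, a + a = 0 := fun a => by
    have h2 : (2 : F) = 0 := by exact_mod_cast CharP.cast_eq_zero F 2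
    calc a + a = 2 * a := (two_mul a).symm
    _ = 0 := by rw [h2, zero_mul]
  have f0 : f 0 = 0 := by
    have h := hf_add 0 0
    rw [add_zero] at h
    exact left_eq_add.mp h
  have star0 : ∀ c : F, star 0 c = 0 := fun c => by
    have h := hstar_left 0 0 c
    rw [add_zero] at h
    exact left_eq_add.mp h
  have mem_iff : ∀ (p : (F × F) ⊕ Option F) (c e : F),
      p ∈ ovalOrbitSet star f c e ↔
        (∃ x : F, p = Sum.inl (x, f x + star x c + e)) ∨
          p = Sum.inr (some c) ∨ p = Sum.inr none := by
    intro p c e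
    simp only [ovalOrbitSet, Set.mem_union, Set.mem_setOf_eq, Set.mem_insert_iff,
      Set.mem_singleton_iff]
  constructor
  · intro c e c' e' h
    have hc : c = c' := by
      have hm : (Sum.inr (some c) : (F × F) ⊕ Option F) ∈ ovalOrbitSet star f c' e' := by
        rw [← h, mem_iff]; right; left; rfl
      rcases (mem_iff _ _ _).mp hm with ⟨x, hx⟩ | h1 | h1
      · simp at hx
      · exact Option.some.inj (Sum.inr.inj h1)
      · simp at h1
    have he : e = e' := by
      have hm : (Sum.inl (0, e) : (F × F) ⊕ Option F) ∈ ovalOrbitSet star f c' e' := by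
        rw [← h, mem_iff]; left; exact ⟨0, by rw [f0, star0]; ring_nf⟩
      rcases (mem_iff _ _ _).mp hm with ⟨x, hx⟩ | h1 | h1
      · have hx' := Sum.inl.inj hx
        have hx0 : (0 : F) = x := congrArg Prod.fst hx'
        have he' : e = f x + star x c' + e' := congrArg Prod.snd hx'
        rw [← hx0, f0, star0] at he'
        simpa using he'
      · simp at h1
      · simp at h1
    exact ⟨hc, he⟩
  · intro c e c' e' hne
    by_cases hcc : c = c'
    · subst hcc
      have hee : e ≠ e' := fun h => hne (by rw [h])
      have hset : ovalOrbitSet star f c e ∩ ovalOrbitSet star f c e' =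
          {Sum.inr (some c), Sum.inr none} := by
        ext p
        simp only [Set.mem_inter_iff, mem_iff, Set.mem_insert_iff, Set.mem_singleton_iff]
        constructor
        · rintro ⟨⟨x, hx⟩ | h1 | h1, h2⟩
          · rcases h2 with ⟨x', hx'⟩ | h2 | h2
            · exfalso
              rw [hx] at hx'
              have hx'' := Sum.inl.inj hx'
              have hxx : x = x' := congrArg Prod.fst hx''
              have hyy := congrArg Prod.snd hx''
              simp only at hyy
              rw [← hxx] at hyy
              exact hee (add_left_cancel hyy)
            · rw [hx] at h2; simp at h2
            · rw [hx] at h2; simp at h2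
          · exact Or.inl h1
          · exact Or.inr h1
        · rintro (h | h) <;> subst h
          · exact ⟨Or.inr (Or.inl rfl), Or.inr (Or.inl rfl)⟩
          · exact ⟨Or.inr (Or.inr rfl), Or.inr (Or.inr rfl)⟩
      constructor
      · rw [hset]; exact Set.ncard_pair (by simp)
      · rw [hset]; simp
    · have hd : c + c' ≠ 0 := by
        intro h
        apply hcc
        have h3 := congrArg (· + c') h
        simpa [add_assoc, htwo] using h3
      obtain ⟨x0, hx0⟩ := (hstar_bij _ hd).2 (e + e')
      simp only at hx0
      have hkey : f x0 + star x0 c + e = f x0 + star x0 c' + e' := by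
        have h : star x0 c + star x0 c' = e + e' := by
          rw [← hstar_right]; exact hx0
        linear_combination h - htwo (star x0 c') + htwo e
      have hset : ovalOrbitSet star f c e ∩ ovalOrbitSet star f c' e' =
          {Sum.inl (x0, f x0 + star x0 c + e), Sum.inr none} := by
        ext p
        simp only [Set.mem_inter_iff, mem_iff, Set.mem_insert_iff, Set.mem_singleton_iff]
        constructor
        · rintro ⟨⟨x, hx⟩ | h1 | h1, h2⟩
          · rcases h2 with ⟨x', hx'⟩ | h2 | h2
            · rw [hx] at hx'
              have hx'' := Sum.inl.inj hx'
              have hxx : x = x' := congrArg Prod.fst hx''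
              have hyy := congrArg Prod.snd hx''
              simp only at hyy
              rw [← hxx] at hyy
              have hsum : star x (c + c') = e + e' := by
                rw [hstar_right]
                linear_combination hyy + htwo (star x c') - htwo e
              have hxeq : x = x0 := (hstar_bij _ hd).1 (by simpa using hsum.trans hx0.symm)
              left; rw [hx, hxeq]
            · rw [hx] at h2; simp at h2
            · rw [hx] at h2; simp at h2
          · exfalso
            rcases h2 with ⟨x', hx'⟩ | h2 | h2
            · rw [h1] at hx'; simp at hx'
            · rw [h1] at h2
              exact hcc (Option.some.inj (Sum.inr.inj h2))
            · rw [h1] at h2; simp at h2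
          · right; exact h1
        · rintro (h | h) <;> subst h
          · exact ⟨Or.inl ⟨x0, rfl⟩, Or.inl ⟨x0, by rw [hkey]⟩⟩
          · exact ⟨Or.inr (Or.inr rfl), Or.inr (Or.inr rfl)⟩
      constructor
      · rw [hset]; exact Set.ncard_pair (by simp)
      · rw [hset]; simp
end

section
/- Let F be a finite field with q = 2^n elements. Let ⋆ : F × F → F be additive in each argument such that for every nonzero c ∈ F both maps x ↦ x⋆c and x ↦ c⋆x are bijections of F. Let f : F → F be an additive bijection such that for every nonzero c ∈ F the set {x ∈ F : f(x) + x⋆c = 0} has exactly 2 elements. Define D := {(c, b) ∈ F × F : there exists x ∈ F with f(x) + x⋆c = b}. Then D is a (q², q²/2 + q/2, q²/4 + q/2)-difference set in the elementary abelian group (F × F, +); that is, D has exactly q²/2 + q/2 elements, and for every (γ, β) ∈ F × F with (γ, β) ≠ (0, 0), the number of ordered pairs (d₁, d₂) ∈ D × D with d₁ − d₂ = (γ, β) equals q²/4 + q/2. -/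
/-!
Write `L_c x = f x + x ⋆ c`. Each `L_c` is additive with kernel of size `k_c`, where `k_0 = 1`
and `k_c = 2` otherwise, so `D` is the union of the columns `{c} × im L_c`, of sizes `q` and
`q / 2`.

For `g = (γ, β) ≠ 0`, the number of `d ∈ D` with `g + d ∈ D` is `∑_c N_c`, where
`N_c = #(im L_c ∩ (im L_{γ+c} - β))`. The equation `L_{γ+c} y = β + L_c x` has
`k_c k_{γ+c} N_c` solutions `(x, y)`. Substituting `z = y - x` turns it into
`z ⋆ c = β - f z - y ⋆ γ`, which for `z ≠ 0` has exactly one solution `c`; summing over `c`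
therefore gives `q (q - 1) + q · #{y | y ⋆ γ = β}`. As `k_c k_{γ+c} = 4` except at `c = 0` and
`c = -γ`, where the columns are known, this determines `∑_c N_c = q² / 4 + q / 2`.
-/

open Finset Function

lemma Finset.card_filter_prod_eq_sum {α β : Type*} [Fintype α] [Fintype β]
    (P : α → β → Prop) [DecidablePred fun p : α × β => P p.1 p.2]
    [∀ a, DecidablePred (P a)] :
    #{p : α × β | P p.1 p.2} = ∑ a, #{b | P a b} := by
  simp only [card_filter, Fintype.sum_prod_type]

lemma Function.Bijective.card_fiber_eq_one {α β : Type*} [Fintype α] [DecidableEq β]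
    {g : α → β} (hg : Bijective g) (b : β) : #{a | g a = b} = 1 := by
  obtain ⟨a, rfl⟩ := hg.surjective b
  exact card_eq_one.mpr ⟨a, by ext; simp [hg.injective.eq_iff]⟩

namespace AddMonoidHom

variable {A B : Type*} [AddCommGroup A] [Fintype A] [AddCommGroup B] [DecidableEq B]

lemma card_fiber_eq_ite (φ : A →+ B) (b : B) :
    #{x | φ x = b} = if b ∈ Set.range φ then #{x | φ x = 0} else 0 := by
  split_ifs with hb
  · exact card_fiber_eq_of_mem_range φ hb ⟨0, map_zero φ⟩
  · rw [card_eq_zero, filter_eq_empty_iff]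
    exact fun x _ hx => hb ⟨x, hx⟩

variable [Fintype B]

lemma card_ker_mul_card_range (φ : A →+ B) :
    #{x | φ x = 0} * #{b | b ∈ Set.range φ} = Fintype.card A := by
  rw [← card_univ, card_eq_sum_card_fiberwise (s := univ) (f := φ) (t := univ)
    fun _ _ => mem_univ _]
  simp only [sum_congr rfl fun b _ => card_fiber_eq_ite φ b]
  rw [← sum_filter, sum_const, smul_eq_mul, mul_comm]

lemma card_apply_eq_add_apply (φ ψ : A →+ B) (β : B) :
    #{t : A × A | ψ t.2 = β + φ t.1} =
      #{x | φ x = 0} * #{y | ψ y = 0} *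
        #{b | b ∈ Set.range φ ∧ β + b ∈ Set.range ψ} := by
  have hfiber : ∀ b, #{t ∈ ({t : A × A | ψ t.2 = β + φ t.1} : Finset _) | φ t.1 = b} =
      if b ∈ Set.range φ ∧ β + b ∈ Set.range ψ then #{x | φ x = 0} * #{y | ψ y = 0}
      else 0 := by
    intro b
    rw [← ite_zero_mul_ite_zero, ← card_fiber_eq_ite, ← card_fiber_eq_ite, filter_filter,
      ← card_product, ← filter_product, univ_product_univ]
    congr 1
    refine filter_congr fun t _ => ?_
    constructor
    · rintro ⟨h, rfl⟩; exact ⟨rfl, h⟩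
    · rintro ⟨rfl, h⟩; exact ⟨h, rfl⟩
  rw [card_eq_sum_card_fiberwise (f := fun t => φ t.1) (t := univ) fun _ _ => mem_univ _,
    sum_congr rfl fun b _ => hfiber b, ← sum_filter, sum_const, smul_eq_mul, mul_comm]

end AddMonoidHom

lemma Set.ncard_setOf_eq_card_filter {α : Type*} [Fintype α] (p : α → Prop) [DecidablePred p] :
    {x | p x}.ncard = #{x | p x} := by
  rw [← Set.ncard_coe_finset, coe_filter_univ]

lemma Set.ncard_pairs_sub_eq {G : Type*} [AddGroup G] (D : Set G) (g : G) :
    {dd : G × G | dd.1 ∈ D ∧ dd.2 ∈ D ∧ dd.1 - dd.2 = g}.ncard =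
      {d | d ∈ D ∧ g + d ∈ D}.ncard := by
  have himage : {dd : G × G | dd.1 ∈ D ∧ dd.2 ∈ D ∧ dd.1 - dd.2 = g} =
      (fun d => (g + d, d)) '' {d | d ∈ D ∧ g + d ∈ D} := by
    ext ⟨d₁, d₂⟩
    simp only [Set.mem_ofPred_eq, Set.mem_image, Prod.mk.injEq, sub_eq_iff_eq_add]
    constructor
    · rintro ⟨h₁, h₂, rfl⟩
      exact ⟨d₂, ⟨h₂, h₁⟩, rfl, rfl⟩
    · rintro ⟨d, ⟨h, hg⟩, rfl, rfl⟩
      exact ⟨hg, h, rfl⟩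
  rw [himage, Set.ncard_image_of_injective _ fun _ _ h => congrArg Prod.snd h]

section Presemifield

variable {F : Type*} [AddCommGroup F] (f : F →+ F) (B : F →+ F →+ F)

/-- `B x c` plays the role of `x ⋆ c`. -/
def ovalMap (c : F) : F →+ F := f + B.flip c

def ovalSet : Set (F × F) := {p | p.2 ∈ Set.range (ovalMap f B p.1)}

@[simp]
lemma ovalMap_apply (c x : F) : ovalMap f B c x = f x + B x c := rfl

lemma ovalMap_zero : ovalMap f B 0 = f := by
  ext x
  simp

lemma ovalMap_add_apply (γ c y : F) : ovalMap f B (γ + c) y = ovalMap f B c y + B y γ := by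
  simp only [ovalMap_apply, map_add]
  abel

variable {f} in
lemma mem_range_ovalMap_zero [Finite F] (hf : Injective f) (b : F) :
    b ∈ Set.range (ovalMap f B 0) := by
  rw [ovalMap_zero]
  exact Finite.surjective_of_injective hf b

variable [Fintype F] [DecidableEq F]

/-- The column over `c` of `ovalSet f B ∩ (ovalSet f B - (γ, β))`. -/
def ovalColumn (γ β c : F) : Finset F :=
  {b | b ∈ Set.range (ovalMap f B c) ∧ β + b ∈ Set.range (ovalMap f B (γ + c))}

lemma ncard_translate_inter_ovalSet_eq_sum (γ β : F) :
    {d | d ∈ ovalSet f B ∧ (γ, β) + d ∈ ovalSet f B}.ncard =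
      ∑ c, #(ovalColumn f B γ β c) := by
  simp only [ovalSet, Set.mem_ofPred_eq, Prod.fst_add, Prod.snd_add]
  rw [Set.ncard_setOf_eq_card_filter, card_filter_prod_eq_sum fun c b =>
    b ∈ Set.range (ovalMap f B c) ∧ β + b ∈ Set.range (ovalMap f B (γ + c))]
  rfl

lemma card_ovalMap_add_eq (γ β c : F) :
    #{t : F × F | ovalMap f B (γ + c) t.2 = β + ovalMap f B c t.1} =
      #{t : F × F | ovalMap f B c t.1 + B t.2 γ = β} := by
  have hinv : Involutive fun t : F × F => (t.2 - t.1, t.2) := fun t => by simp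
  refine card_equiv hinv.toPerm fun t => ?_
  simp only [mem_filter_univ, Involutive.coe_toPerm, map_sub, ovalMap_add_apply]
  rw [add_comm β, ← sub_eq_iff_eq_add', sub_add_eq_add_sub]

lemma card_ovalMap_apply_eq_one {z : F} (hz : Bijective (B z)) (w β : F) :
    #{c | ovalMap f B c z + w = β} = 1 := by
  rw [← hz.card_fiber_eq_one (β - w - f z)]
  congr 1
  refine filter_congr fun c _ => ?_
  rw [ovalMap_apply, sub_sub, eq_sub_iff_add_eq, add_comm w, ← add_assoc, add_comm (B z c)]

lemma sum_card_ovalMap_add_eq (hB : ∀ z ≠ 0, Bijective (B z)) (γ β : F) :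
    ∑ c, #{t : F × F | ovalMap f B c t.1 + B t.2 γ = β} + Fintype.card F =
      Fintype.card F * (#{y | B y γ = β} + Fintype.card F) := by
  have hswap : ∑ c, #{t : F × F | ovalMap f B c t.1 + B t.2 γ = β} =
      ∑ z, ∑ y, #{c | ovalMap f B c z + B y γ = β} := by
    simp only [card_filter]
    rw [sum_comm, Fintype.sum_prod_type]
  have hzero :
      ∑ y, #{c | ovalMap f B c 0 + B y γ = β} = #{y | B y γ = β} * Fintype.card F := by
    simp only [map_zero, zero_add, filter_const, apply_ite card, card_univ, card_empty]
    rw [← sum_filter, sum_const, smul_eq_mul]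
  have hne : ∀ z ∈ ({0}ᶜ : Finset F),
      ∑ y, #{c | ovalMap f B c z + B y γ = β} = Fintype.card F := by
    intro z hz
    rw [sum_congr rfl fun y _ => card_ovalMap_apply_eq_one f B (hB z (by simpa using hz)) _ β,
      sum_const, card_univ, smul_eq_mul, mul_one]
  rw [hswap, Fintype.sum_eq_add_sum_compl 0, hzero, sum_congr rfl hne, sum_const, card_compl,
    card_singleton, smul_eq_mul]
  obtain ⟨m, hm⟩ := Nat.exists_eq_add_one_of_ne_zero (Fintype.card_ne_zero (α := F))
  rw [hm, Nat.add_sub_cancel]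
  ring

lemma sum_card_ker_mul_card_ovalColumn (hB : ∀ z ≠ 0, Bijective (B z)) (γ β : F) :
    ∑ c, #{x | ovalMap f B c x = 0} * #{y | ovalMap f B (γ + c) y = 0} *
        #(ovalColumn f B γ β c) + Fintype.card F =
      Fintype.card F * (#{y | B y γ = β} + Fintype.card F) := by
  simp only [ovalColumn, ← AddMonoidHom.card_apply_eq_add_apply, card_ovalMap_add_eq]
  exact sum_card_ovalMap_add_eq f B hB γ β

variable {f}

lemma card_ker_ovalMap_zero (hf : Injective f) : #{x | ovalMap f B 0 x = 0} = 1 := by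
  rw [card_eq_one]
  exact ⟨0, by ext x; simp [ovalMap_zero, map_eq_zero_iff f hf]⟩

lemma card_range_ovalMap_zero (hf : Injective f) :
    #{b | b ∈ Set.range (ovalMap f B 0)} = Fintype.card F := by
  simp only [mem_range_ovalMap_zero B hf, filter_true, card_univ]

lemma two_mul_card_range_ovalMap {c : F} (hc : #{x | ovalMap f B c x = 0} = 2) :
    2 * #{b | b ∈ Set.range (ovalMap f B c)} = Fintype.card F := by
  rw [← hc, AddMonoidHom.card_ker_mul_card_range]

lemma two_mul_ncard_ovalSet (hf : Injective f)
    (hker : ∀ c ≠ 0, #{x | ovalMap f B c x = 0} = 2) :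
    2 * (ovalSet f B).ncard = Fintype.card F ^ 2 + Fintype.card F := by
  rw [ovalSet, Set.ncard_setOf_eq_card_filter,
    card_filter_prod_eq_sum fun c b => b ∈ Set.range (ovalMap f B c), mul_sum,
    ← add_sum_erase _ _ (mem_univ 0), card_range_ovalMap_zero B hf,
    sum_congr rfl fun c hc => two_mul_card_range_ovalMap B (hker c (ne_of_mem_erase hc)),
    sum_const, smul_eq_mul]
  have := card_erase_add_one (mem_univ (0 : F))
  rw [card_univ] at this
  nlinarith

lemma card_ovalColumn_zero_zero (hf : Injective f) (β : F) :
    #(ovalColumn f B 0 β 0) = Fintype.card F := by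
  simp only [ovalColumn, zero_add, mem_range_ovalMap_zero B hf, and_self, filter_true, card_univ]

lemma two_mul_card_ovalColumn_zero (hf : Injective f) {γ : F}
    (hγ : #{x | ovalMap f B γ x = 0} = 2) (β : F) :
    2 * #(ovalColumn f B γ β 0) = Fintype.card F := by
  refine Eq.trans ?_ (two_mul_card_range_ovalMap B hγ)
  simp only [ovalColumn, add_zero, mem_range_ovalMap_zero B hf, true_and]
  exact congrArg (2 * ·) (card_equiv (Equiv.addLeft β) (by simp))

lemma two_mul_card_ovalColumn_neg (hf : Injective f) {γ : F}
    (hγ : #{x | ovalMap f B (-γ) x = 0} = 2) (β : F) :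
    2 * #(ovalColumn f B γ β (-γ)) = Fintype.card F := by
  refine Eq.trans ?_ (two_mul_card_range_ovalMap B hγ)
  simp only [ovalColumn, add_neg_cancel, mem_range_ovalMap_zero B hf, and_true]

lemma sum_card_ker_mul_eq_four_mul {s : Finset F} {γ : F}
    (hker : ∀ c ∈ s, #{x | ovalMap f B c x = 0} = 2 ∧ #{x | ovalMap f B (γ + c) x = 0} = 2)
    (N : F → ℕ) :
    ∑ c ∈ s, #{x | ovalMap f B c x = 0} * #{y | ovalMap f B (γ + c) y = 0} * N c =
      4 * ∑ c ∈ s, N c := by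
  rw [mul_sum]
  exact sum_congr rfl fun c hc => by rw [(hker c hc).1, (hker c hc).2]

lemma four_mul_sum_card_ovalColumn_of_eq_zero (hf : Injective f)
    (hker : ∀ c ≠ 0, #{x | ovalMap f B c x = 0} = 2) (hB : ∀ z ≠ 0, Bijective (B z))
    {β : F} (hβ : β ≠ 0) :
    4 * ∑ c, #(ovalColumn f B 0 β c) = Fintype.card F ^ 2 + 2 * Fintype.card F := by
  have key := sum_card_ker_mul_card_ovalColumn f B hB 0 β
  have hW : #{y | B y 0 = β} = 0 := by simp [hβ.symm]
  rw [← add_sum_erase _ _ (mem_univ 0)] at key ⊢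
  rw [sum_card_ker_mul_eq_four_mul B fun c hc => by
      simpa only [zero_add, and_self] using hker c (ne_of_mem_erase hc),
    zero_add, card_ker_ovalMap_zero B hf, card_ovalColumn_zero_zero B hf, hW] at key
  rw [card_ovalColumn_zero_zero B hf]
  nlinarith

lemma four_mul_sum_card_ovalColumn_of_ne_zero (hf : Injective f)
    (hker : ∀ c ≠ 0, #{x | ovalMap f B c x = 0} = 2) (hB : ∀ z ≠ 0, Bijective (B z))
    (hB' : ∀ c ≠ 0, Bijective (B.flip c)) {γ : F} (hγ : γ ≠ 0) (β : F) :
    4 * ∑ c, #(ovalColumn f B γ β c) = Fintype.card F ^ 2 + 2 * Fintype.card F := by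
  have key := sum_card_ker_mul_card_ovalColumn f B hB γ β
  have hγ' : -γ ≠ 0 := neg_ne_zero.mpr hγ
  have hW : #{y | B y γ = β} = 1 := (hB' γ hγ).card_fiber_eq_one β
  have h0 := two_mul_card_ovalColumn_zero B hf (hker γ hγ) β
  have hneg := two_mul_card_ovalColumn_neg B hf (hker (-γ) hγ') β
  rw [← add_sum_erase _ _ (mem_univ 0),
    ← add_sum_erase _ _ (mem_erase.mpr ⟨hγ', mem_univ _⟩)] at key ⊢
  rw [sum_card_ker_mul_eq_four_mul B fun c hc =>
      ⟨hker c (ne_of_mem_erase (mem_of_mem_erase hc)),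
        hker _ fun h => ne_of_mem_erase hc (eq_neg_of_add_eq_zero_right h)⟩,
    add_zero, add_neg_cancel, card_ker_ovalMap_zero B hf, hker γ hγ, hker (-γ) hγ', hW] at key
  nlinarith

lemma four_mul_ncard_translate_inter_ovalSet (hf : Injective f)
    (hker : ∀ c ≠ 0, #{x | ovalMap f B c x = 0} = 2) (hB : ∀ z ≠ 0, Bijective (B z))
    (hB' : ∀ c ≠ 0, Bijective (B.flip c)) {g : F × F} (hg : g ≠ 0) :
    4 * {d | d ∈ ovalSet f B ∧ g + d ∈ ovalSet f B}.ncard =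
      Fintype.card F ^ 2 + 2 * Fintype.card F := by
  obtain ⟨γ, β⟩ := g
  rw [ncard_translate_inter_ovalSet_eq_sum]
  rcases eq_or_ne γ 0 with rfl | hγ
  · exact four_mul_sum_card_ovalColumn_of_eq_zero B hf hker hB fun hβ => hg (by rw [hβ]; rfl)
  · exact four_mul_sum_card_ovalColumn_of_ne_zero B hf hker hB hB' hγ β

end Presemifield

theorem hyperoval_difference_set_elementary_abelian_general
    {F : Type*} [Field F] [Fintype F]
    (q : ℕ) (hF : Fintype.card F = q)
    (star : F → F → F)
    (hstar_left : ∀ a b c : F, star (a + b) c = star a c + star b c)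
    (hstar_right : ∀ a b c : F, star a (b + c) = star a b + star a c)
    (hstar_bij_right : ∀ c : F, c ≠ 0 → Function.Bijective (fun x : F => star x c))
    (hstar_bij_left : ∀ c : F, c ≠ 0 → Function.Bijective (fun x : F => star c x))
    (f : F → F)
    (hf_add : ∀ x y : F, f (x + y) = f x + f y)
    (hf_bij : Function.Bijective f)
    (hker : ∀ c : F, c ≠ 0 → ({x : F | f x + star x c = 0}).ncard = 2) :
    ({p : F × F | ∃ x : F, f x + star x p.1 = p.2}).ncard = q ^ 2 / 2 + q / 2 ∧
    ∀ g : F × F, g ≠ (0, 0) →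
      ({dd : (F × F) × (F × F) |
          dd.1 ∈ {p : F × F | ∃ x : F, f x + star x p.1 = p.2} ∧
          dd.2 ∈ {p : F × F | ∃ x : F, f x + star x p.1 = p.2} ∧
          dd.1 - dd.2 = g}).ncard = q ^ 2 / 4 + q / 2 := by
  classical
  let B : F →+ F →+ F := AddMonoidHom.mk' (fun x => AddMonoidHom.mk' (star x) (hstar_right x))
    fun a b => AddMonoidHom.ext (hstar_left a b)
  let f' : F →+ F := AddMonoidHom.mk' f hf_add
  have hD : {p : F × F | ∃ x : F, f x + star x p.1 = p.2} = ovalSet f' B := rfl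
  have hker' : ∀ c ≠ 0, #{x | ovalMap f' B c x = 0} = 2 := fun c hc => by
    rw [← hker c hc, Set.ncard_setOf_eq_card_filter]
    rfl
  obtain ⟨m, rfl⟩ : 2 ∣ q :=
    hF ▸ Dvd.intro _ (two_mul_card_range_ovalMap B (hker' 1 one_ne_zero))
  have hsq : (2 * m) ^ 2 = 4 * (m * m) := by ring
  rw [hD]
  refine ⟨?_, fun g hg => ?_⟩
  · have := two_mul_ncard_ovalSet B hf_bij.injective hker'
    rw [hF, hsq] at this
    rw [hsq]
    omega
  · have := four_mul_ncard_translate_inter_ovalSet B hf_bij.injective hker' hstar_bij_left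
      hstar_bij_right hg
    rw [hF, hsq] at this
    rw [Set.ncard_pairs_sub_eq, hsq]
    omega

/-- Theorem 5.3, difference set in `G₁ ≅ C₂^{2n}`: let `(F, +, ⋆)` be a presemifield of
order `q = 2^n` and `f` an additive bijection such that for every nonzero `c` the kernel
`{x : f(x) + x⋆c = 0}` has exactly `2` elements (a translation hyperoval of type (a)).
Then `D = {(c,b) : ∃ x, f(x) + x⋆c = b}` is a `(q², q²/2 + q/2, q²/4 + q/2)`-difference
set in the elementary abelian group `(F × F, +)`. -/
theorem hyperoval_difference_set_elementary_abelian
    {F : Type*} [Field F] [Fintype F]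
    (n q : ℕ) (hq : q = 2 ^ n) (hF : Fintype.card F = q)
    (star : F → F → F)
    (hstar_left : ∀ a b c : F, star (a + b) c = star a c + star b c)
    (hstar_right : ∀ a b c : F, star a (b + c) = star a b + star a c)
    (hstar_bij_right : ∀ c : F, c ≠ 0 → Function.Bijective (fun x : F => star x c))
    (hstar_bij_left : ∀ c : F, c ≠ 0 → Function.Bijective (fun x : F => star c x))
    (f : F → F)
    (hf_add : ∀ x y : F, f (x + y) = f x + f y)
    (hf_bij : Function.Bijective f)
    (hker : ∀ c : F, c ≠ 0 → ({x : F | f x + star x c = 0}).ncard = 2) :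
    ({p : F × F | ∃ x : F, f x + star x p.1 = p.2}).ncard = q ^ 2 / 2 + q / 2 ∧
    ∀ g : F × F, g ≠ (0, 0) →
      ({dd : (F × F) × (F × F) |
          dd.1 ∈ {p : F × F | ∃ x : F, f x + star x p.1 = p.2} ∧
          dd.2 ∈ {p : F × F | ∃ x : F, f x + star x p.1 = p.2} ∧
          dd.1 - dd.2 = g}).ncard = q ^ 2 / 4 + q / 2 :=
  hyperoval_difference_set_elementary_abelian_general q hF star hstar_left hstar_right
    hstar_bij_right hstar_bij_left f hf_add hf_bij hker
end
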